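/- arXiv:2407.08180 — 10 statements merged into one kernel-verified Lean document; each statement's English description precedes it below -/
import Mathlib

section
/- Let 2 ≤ m ≤ n and let x : Fin (m+n) → ℝ be nonzero with Σ_j x_j = 0, x_1 ≤ ⋯ ≤ x_m, x_{m+1} ≤ ⋯ ≤ x_{m+n}, and x_i ≤ x_j whenever 1 ≤ i ≤ m < j ≤ m+n. Set r = #{i : 1 ≤ i ≤ m−1, x_i < x_m} and t = #{j : m+1 ≤ j ≤ m+n, x_m < x_j}. Then (r,t) ≠ (0,0) and #{(i,j) : 1 ≤ i ≤ m < j ≤ m+n, x_i < x_j} = r·n + (m−r)·t. -/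
/-! Everything is compared with the pivot value `x m`: every `x i` with `i ≤ m` is at most `x m`
and every `x j` with `j > m` is at least `x m`. A pair `(i, j)` with `x i < x m` therefore always
satisfies `x i < x j`, while for the `m - r` indices with `x i = x m` it does exactly when
`x m < x j`. If `r = t = 0`, all coordinates equal `x m`, so the zero sum forces `x = 0`. -/

open Finset

variable {ι κ α : Type*}

theorem Finset.card_filter_product_lt_of_le_le [LinearOrder α] (A : Finset ι) (B : Finset κ)
    (f : ι → α) (g : κ → α) (c : α) (hf : ∀ i ∈ A, f i ≤ c) (hg : ∀ j ∈ B, c ≤ g j) :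
    #{p ∈ A ×ˢ B | f p.1 < g p.2} =
      #{i ∈ A | f i < c} * #B + #{i ∈ A | ¬ f i < c} * #{j ∈ B | c < g j} := by
  have hfiber : ∀ i ∈ A, #{j ∈ B | f i < g j} = if f i < c then #B else #{j ∈ B | c < g j} := by
    intro i hi
    split_ifs with hic
    · exact congrArg card (filter_true_of_mem fun j hj => hic.trans_le (hg j hj))
    · rw [(hf i hi).antisymm (not_lt.1 hic)]
  rw [card_filter, sum_product, sum_congr rfl fun i _ => (card_filter _ _).symm,
    sum_congr rfl hfiber, sum_ite, sum_const, sum_const, smul_eq_mul, smul_eq_mul]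

theorem Finset.filter_Icc_lt_right_eq [LinearOrder α] (f : ℕ → α) {a b : ℕ} (h : a ≤ b) :
    {i ∈ Icc a b | f i < f b} = {i ∈ Icc a (b - 1) | f i < f b} := by
  rw [← insert_Icc_sub_one_right_eq_Icc h, filter_insert, if_neg (lt_irrefl _)]

theorem Finset.forall_eq_of_card_filter_lt_eq_zero [LinearOrder α] {s : Finset ι} {f : ι → α}
    {c : α} (hf : ∀ i ∈ s, f i ≤ c) (h0 : #{i ∈ s | f i < c} = 0) : ∀ i ∈ s, f i = c :=
  fun i hi => (hf i hi).eq_of_not_lt (filter_eq_empty_iff.1 (card_eq_zero.1 h0) hi)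

theorem Finset.forall_eq_zero_of_sum_eq_zero_of_forall_eq {M : Type*} [AddCommMonoid M]
    [IsAddTorsionFree M] {s : Finset ι} {f : ι → M} {c : M}
    (hf : ∀ i ∈ s, f i = c) (hsum : ∑ i ∈ s, f i = 0) : ∀ i ∈ s, f i = 0 := by
  intro i hi
  rw [sum_congr rfl hf, sum_const] at hsum
  rw [hf i hi]
  exact (nsmul_eq_zero_iff ..).1 hsum |>.resolve_right (card_ne_zero_of_mem hi)

theorem stmt2_general (m n : ℕ) (hm : 2 ≤ m) (x : ℕ → ℝ)
    (hx : ∃ j ∈ Finset.Icc 1 (m+n), x j ≠ 0)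
    (hsum : ∑ j ∈ Finset.Icc 1 (m+n), x j = 0)
    (hmono1 : ∀ i j, 1 ≤ i → i ≤ j → j ≤ m → x i ≤ x j)
    (hle : ∀ i j, 1 ≤ i → i ≤ m → m < j → j ≤ m+n → x i ≤ x j) :
    let r := ((Finset.Icc 1 (m-1)).filter (fun i => x i < x m)).card
    let t := ((Finset.Icc (m+1) (m+n)).filter (fun j => x m < x j)).card
    (r, t) ≠ (0, 0) ∧
    ((Finset.Icc 1 m ×ˢ Finset.Icc (m+1) (m+n)).filter
        (fun p => x p.1 < x p.2)).card = r * n + (m - r) * t := by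
  intro r t
  have hxm : ∀ i ∈ Icc 1 m, x i ≤ x m := fun i hi =>
    hmono1 i m (mem_Icc.1 hi).1 (mem_Icc.1 hi).2 le_rfl
  have hmx : ∀ j ∈ Icc (m + 1) (m + n), x m ≤ x j := fun j hj =>
    hle m j (by omega) le_rfl (mem_Icc.1 hj).1 (mem_Icc.1 hj).2
  have hr : #{i ∈ Icc 1 m | x i < x m} = r := congrArg card (filter_Icc_lt_right_eq x (by omega))
  refine ⟨fun hrt => ?_, ?_⟩
  · obtain ⟨hr0, ht0⟩ := Prod.mk.inj hrt
    have hconst : ∀ j ∈ Icc 1 (m + n), x j = x m := by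
      intro j hj
      rw [mem_Icc] at hj
      rcases le_or_gt j m with hjm | hjm
      · exact forall_eq_of_card_filter_lt_eq_zero hxm (hr.trans hr0) j (mem_Icc.2 ⟨hj.1, hjm⟩)
      · exact forall_eq_of_card_filter_lt_eq_zero (α := ℝᵒᵈ) hmx ht0 j (mem_Icc.2 ⟨hjm, hj.2⟩)
    obtain ⟨j, hj, hxj⟩ := hx
    exact hxj (forall_eq_zero_of_sum_eq_zero_of_forall_eq hconst hsum j hj)
  · have hcompl : #{i ∈ Icc 1 m | ¬ x i < x m} = m - r := by
      have := card_filter_add_card_filter_not (s := Icc 1 m) (fun i => x i < x m)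
      simp only [hr, Nat.card_Icc] at this
      omega
    rw [card_filter_product_lt_of_le_le _ _ x x (x m) hxm hmx, hr, hcompl, Nat.card_Icc]
    congr 2
    omega

/-- Type AIII, G = SU(m,n) with 2 ≤ m ≤ n, case R⁺ = 0: with r, t as indicated,
(r,t) ≠ (0,0) and #{(i,j) : i ≤ m < j ≤ m+n, x_i < x_j} = r·n + (m−r)·t. -/
theorem stmt2 (m n : ℕ) (hm : 2 ≤ m) (hmn : m ≤ n) (x : ℕ → ℝ)
    (hx : ∃ j ∈ Finset.Icc 1 (m+n), x j ≠ 0)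
    (hsum : ∑ j ∈ Finset.Icc 1 (m+n), x j = 0)
    (hmono1 : ∀ i j, 1 ≤ i → i ≤ j → j ≤ m → x i ≤ x j)
    (hmono2 : ∀ i j, m+1 ≤ i → i ≤ j → j ≤ m+n → x i ≤ x j)
    (hle : ∀ i j, 1 ≤ i → i ≤ m → m < j → j ≤ m+n → x i ≤ x j) :
    let r := ((Finset.Icc 1 (m-1)).filter (fun i => x i < x m)).card
    let t := ((Finset.Icc (m+1) (m+n)).filter (fun j => x m < x j)).card
    (r, t) ≠ (0, 0) ∧
    ((Finset.Icc 1 m ×ˢ Finset.Icc (m+1) (m+n)).filter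
        (fun p => x p.1 < x p.2)).card = r * n + (m - r) * t :=
  stmt2_general m n hm x hx hsum hmono1 hle
end

section
/- Let 2 ≤ m ≤ n, let 0 ≤ r ≤ m−1 and 0 ≤ t ≤ n with (r,t) ≠ (0,0). Then there exists a nonzero x : Fin (m+n) → ℝ with Σ_j x_j = 0 such that x_i ≤ x_j for all 1 ≤ i ≤ m < j ≤ m+n and #{(i,j) : 1 ≤ i ≤ m < j ≤ m+n, x_i < x_j} = r·n + (m−r)·t. In particular one may take x with first r coordinates equal to −t, last t coordinates equal to r, and all other coordinates 0. -/
/-- Realization for type AIII, G = SU(m,n): every value r·n + (m−r)·t with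
0 ≤ r ≤ m−1, 0 ≤ t ≤ n, (r,t) ≠ (0,0) is realized as
#{(i,j) : i ≤ m < j ≤ m+n, x_i < x_j} for a nonzero sum-zero x with
x_i ≤ x_j for all i ≤ m < j. -/
theorem stmt3 (m n r t : ℕ) (hm : 2 ≤ m) (hmn : m ≤ n)
    (hr : r ≤ m - 1) (ht : t ≤ n) (hrt : (r, t) ≠ (0, 0)) :
    ∃ x : ℕ → ℝ,
      (∃ j ∈ Finset.Icc 1 (m+n), x j ≠ 0) ∧
      (∑ j ∈ Finset.Icc 1 (m+n), x j = 0) ∧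
      (∀ i j, 1 ≤ i → i ≤ m → m < j → j ≤ m+n → x i ≤ x j) ∧
      ((Finset.Icc 1 m ×ˢ Finset.Icc (m+1) (m+n)).filter
          (fun p => x p.1 < x p.2)).card = r * n + (m - r) * t := by
  have hrm : r < m := by omega
  set M := m + n - t with hM
  have hrM : r ≤ M := by omega
  have hMmn : M ≤ m + n := by omega
  have hmM : m ≤ M := by omega
  -- real cast facts
  have hc1 : (r:ℝ) < m := by exact_mod_cast hrm
  have hc2 : (m:ℝ) ≤ n := by exact_mod_cast hmn
  have hc3 : (t:ℝ) ≤ n := by exact_mod_cast ht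
  have hn0 : (0:ℝ) ≤ n := by positivity
  set D : ℝ := (m:ℝ) + n - r with hD
  have hDpos : 0 < D := by rw [hD]; linarith
  set v : ℝ := ((r:ℝ)*((n:ℝ)+1) - t)/D with hv
  have hv1 : -1 < v := by
    rw [hv, lt_div_iff₀ hDpos]
    have : (0:ℝ) ≤ (r:ℝ)*((n:ℝ)+1) := by positivity
    rw [hD]; nlinarith
  have hvlow : -((n:ℝ)+1) < v := by linarith
  refine ⟨fun k => if k ≤ r then -((n:ℝ)+1) else if k ≤ M then v else v + 1, ?_, ?_, ?_, ?_⟩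
  · -- nonzero
    rcases Nat.eq_zero_or_pos r with hr0 | hr0
    · have ht0 : 0 < t := by
        rcases Nat.eq_zero_or_pos t with h | h
        · exact absurd (by rw [hr0, h]) hrt
        · exact h
      refine ⟨m+n, by simp [Finset.mem_Icc]; omega, ?_⟩
      have h1 : ¬ (m+n ≤ r) := by omega
      have h2 : ¬ (m+n ≤ M) := by omega
      simp only [h1, h2, if_false]
      linarith
    · refine ⟨1, by simp [Finset.mem_Icc]; omega, ?_⟩
      have h1 : 1 ≤ r := hr0
      simp only [h1, if_true]
      have : (0:ℝ) < (n:ℝ) + 1 := by linarith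
      linarith
  · -- sum zero
    have e1 : Finset.Icc 1 (m+n) = Finset.Ioc 0 (m+n) := by
      ext k; simp [Finset.mem_Icc, Finset.mem_Ioc]; omega
    rw [e1, ← Finset.sum_Ioc_consecutive _ (Nat.zero_le M) hMmn,
        ← Finset.sum_Ioc_consecutive _ (Nat.zero_le r) hrM]
    have s1 : ∑ k ∈ Finset.Ioc 0 r, (if k ≤ r then -((n:ℝ)+1) else if k ≤ M then v else v + 1)
        = r * (-((n:ℝ)+1)) := by
      have hc : ∀ k ∈ Finset.Ioc 0 r, (if k ≤ r then -((n:ℝ)+1) else if k ≤ M then v else v + 1) = -((n:ℝ)+1) := by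
        intro k hk; simp only [Finset.mem_Ioc] at hk; simp [hk.2]
      rw [Finset.sum_congr rfl hc, Finset.sum_const, Nat.card_Ioc]
      simp only [Nat.sub_zero, nsmul_eq_mul]
    have s2 : ∑ k ∈ Finset.Ioc r M, (if k ≤ r then -((n:ℝ)+1) else if k ≤ M then v else v + 1)
        = (M - r : ℕ) * v := by
      have hc : ∀ k ∈ Finset.Ioc r M, (if k ≤ r then -((n:ℝ)+1) else if k ≤ M then v else v + 1) = v := by
        intro k hk; simp only [Finset.mem_Ioc] at hk
        have h1 : ¬ (k ≤ r) := by omega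
        simp [h1, hk.2]
      rw [Finset.sum_congr rfl hc, Finset.sum_const, Nat.card_Ioc]
      simp [nsmul_eq_mul]
    have s3 : ∑ k ∈ Finset.Ioc M (m+n), (if k ≤ r then -((n:ℝ)+1) else if k ≤ M then v else v + 1)
        = ((m+n) - M : ℕ) * (v+1) := by
      have hc : ∀ k ∈ Finset.Ioc M (m+n), (if k ≤ r then -((n:ℝ)+1) else if k ≤ M then v else v + 1) = v + 1 := by
        intro k hk; simp only [Finset.mem_Ioc] at hk
        have h1 : ¬ (k ≤ r) := by omega
        have h2 : ¬ (k ≤ M) := by omega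
        simp [h1, h2]
      rw [Finset.sum_congr rfl hc, Finset.sum_const, Nat.card_Ioc]
      simp only [nsmul_eq_mul]
    rw [s1, s2, s3]
    have hMr : ((M - r : ℕ) : ℝ) = (M:ℝ) - r := by
      push_cast [Nat.cast_sub hrM]; ring
    have hmnM : (((m+n) - M : ℕ) : ℝ) = (t:ℝ) := by
      have : (m+n) - M = t := by omega
      rw [this]
    have hMcast : (M:ℝ) = (m:ℝ) + n - t := by
      have : (M:ℕ) + t = m + n := by omega
      have := congrArg (fun k : ℕ => (k:ℝ)) this
      push_cast at this
      linarith
    rw [hMr, hmnM, hMcast]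
    have hveq : v * D = (r:ℝ)*((n:ℝ)+1) - t := by
      rw [hv]; field_simp
    rw [hD] at hveq
    nlinarith [hveq]
  · -- monotone
    intro i j h1 h2 h3 h4
    by_cases hi : i ≤ r
    · simp only [hi, if_true]
      have hj1 : ¬ (j ≤ r) := by omega
      simp only [hj1, if_false]
      by_cases hj2 : j ≤ M <;> simp [hj2] <;> linarith
    · have hiM : i ≤ M := by omega
      simp only [hi, if_false, hiM, if_true]
      have hj1 : ¬ (j ≤ r) := by omega
      simp only [hj1, if_false]
      by_cases hj2 : j ≤ M <;> simp [hj2] <;> linarith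
  · -- card
    have hset : ((Finset.Icc 1 m ×ˢ Finset.Icc (m+1) (m+n)).filter
          (fun p => (if p.1 ≤ r then -((n:ℝ)+1) else if p.1 ≤ M then v else v + 1)
            < (if p.2 ≤ r then -((n:ℝ)+1) else if p.2 ≤ M then v else v + 1)))
        = (Finset.Icc 1 r ×ˢ Finset.Icc (m+1) (m+n))
          ∪ (Finset.Icc (r+1) m ×ˢ Finset.Icc (M+1) (m+n)) := by
      ext ⟨i, j⟩
      simp only [Finset.mem_filter, Finset.mem_product, Finset.mem_Icc, Finset.mem_union]
      constructor
      · rintro ⟨⟨⟨hi1, hi2⟩, hj1, hj2⟩, hlt⟩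
        by_cases hi : i ≤ r
        · left; exact ⟨⟨hi1, hi⟩, hj1, hj2⟩
        · right
          refine ⟨⟨by omega, hi2⟩, ?_, hj2⟩
          by_contra hj
          have hjM : j ≤ M := by omega
          have hiM : i ≤ M := by omega
          have hjr : ¬ (j ≤ r) := by omega
          simp only [hi, if_false, hiM, if_true, hjr, hjM] at hlt
          exact lt_irrefl v hlt
      · rintro (⟨⟨hi1, hi2⟩, hj1, hj2⟩ | ⟨⟨hi1, hi2⟩, hj1, hj2⟩)
        · refine ⟨⟨⟨hi1, by omega⟩, hj1, hj2⟩, ?_⟩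
          have hjr : ¬ (j ≤ r) := by omega
          simp only [hi2, if_true, hjr, if_false]
          by_cases hjM : j ≤ M <;> simp [hjM] <;> linarith
        · refine ⟨⟨⟨by omega, hi2⟩, by omega, hj2⟩, ?_⟩
          have hir : ¬ (i ≤ r) := by omega
          have hiM : i ≤ M := by omega
          have hjr : ¬ (j ≤ r) := by omega
          have hjM : ¬ (j ≤ M) := by omega
          simp only [hir, if_false, hiM, if_true, hjr, hjM]
          linarith
    rw [hset, Finset.card_union_of_disjoint, Finset.card_product, Finset.card_product]
    · have c1 : (Finset.Icc 1 r).card = r := by rw [Nat.card_Icc]; omega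
      have c2 : (Finset.Icc (m+1) (m+n)).card = n := by rw [Nat.card_Icc]; omega
      have c3 : (Finset.Icc (r+1) m).card = m - r := by rw [Nat.card_Icc]; omega
      have c4 : (Finset.Icc (M+1) (m+n)).card = t := by rw [Nat.card_Icc]; omega
      rw [c1, c2, c3, c4]
    · apply Finset.disjoint_left.mpr
      rintro ⟨i, j⟩ h1 h2
      simp only [Finset.mem_product, Finset.mem_Icc] at h1 h2
      omega
end

section
/- Let 2 ≤ m ≤ n and let x : Fin (m+n) → ℝ satisfy Σ_j x_j = 0, x_1 ≤ ⋯ ≤ x_m, x_{m+1} ≤ ⋯ ≤ x_{m+n}, and suppose that (m, m+1) is the unique pair (i,j) with 1 ≤ i ≤ m < j ≤ m+n and x_i > x_j (so that x_{m−1} ≤ x_{m+1} < x_m ≤ x_{m+2}). Set r = #{i : 1 ≤ i ≤ m−1, x_i < x_{m+1}} and let s be defined so that #{j ≥ m+2 : x_m < x_j} = m+n−s+1. Then #{(i,j) : 1 ≤ i ≤ m < j ≤ m+n, x_i < x_j} = (m−1)(n−1) + r + (m+n−s+1) = mn + r − s + 2. -/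
/-- Type AIII, G = SU(m,n) with 2 ≤ m ≤ n, case R⁺ = 1: if (m, m+1) is the
unique pair (i,j) with i ≤ m < j ≤ m+n and x_i > x_j, then with
r = #{i ≤ m−1 : x_i < x_{m+1}} and c = #{j ≥ m+2 : x_m < x_j} (= m+n−s+1),
#{(i,j) : i ≤ m < j ≤ m+n, x_i < x_j} = (m−1)(n−1) + r + c. -/
theorem stmt4 (m n : ℕ) (hm : 2 ≤ m) (hmn : m ≤ n) (x : ℕ → ℝ)
    (hsum : ∑ j ∈ Finset.Icc 1 (m+n), x j = 0)
    (hmono1 : ∀ i j, 1 ≤ i → i ≤ j → j ≤ m → x i ≤ x j)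
    (hmono2 : ∀ i j, m+1 ≤ i → i ≤ j → j ≤ m+n → x i ≤ x j)
    (huniq : ∀ i j, 1 ≤ i → i ≤ m → m < j → j ≤ m+n →
      (x j < x i ↔ (i = m ∧ j = m+1))) :
    let r := ((Finset.Icc 1 (m-1)).filter (fun i => x i < x (m+1))).card
    let c := ((Finset.Icc (m+2) (m+n)).filter (fun j => x m < x j)).card
    ((Finset.Icc 1 m ×ˢ Finset.Icc (m+1) (m+n)).filter
        (fun p => x p.1 < x p.2)).card = (m-1) * (n-1) + r + c := by
  intro r c
  have hA : ∀ i, 1 ≤ i → i ≤ m - 1 → x i ≤ x (m+1) := by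
    intro i h1 h2
    by_contra h
    push_neg at h
    have := (huniq i (m+1) h1 (by omega) (by omega) (by omega)).mp h
    omega
  have hB : ∀ j, m + 2 ≤ j → j ≤ m + n → x m ≤ x j := by
    intro j h1 h2
    by_contra h
    push_neg at h
    have := (huniq m j (by omega) le_rfl (by omega) h2).mp h
    omega
  have hM : x (m+1) < x m :=
    (huniq m (m+1) (by omega) le_rfl (by omega) (by omega)).mpr ⟨rfl, rfl⟩
  have hset : (Finset.Icc 1 m ×ˢ Finset.Icc (m+1) (m+n)).filter (fun p => x p.1 < x p.2) =
      ((Finset.Icc 1 (m-1) ×ˢ Finset.Icc (m+2) (m+n)) ∪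
      ((Finset.Icc 1 (m-1)).filter (fun i => x i < x (m+1)) ×ˢ {m+1})) ∪
      ({m} ×ˢ (Finset.Icc (m+2) (m+n)).filter (fun j => x m < x j)) := by
    ext ⟨i, j⟩
    simp only [Finset.mem_filter, Finset.mem_product, Finset.mem_union, Finset.mem_Icc,
      Finset.mem_singleton]
    constructor
    · rintro ⟨⟨⟨hi1, hi2⟩, hj1, hj2⟩, hx⟩
      by_cases him : i = m
      · by_cases hjm : j = m+1
        · rw [him, hjm] at hx; exact absurd hx (not_lt.mpr hM.le)
        · right; rw [him] at hx; exact ⟨him, ⟨by omega, hj2⟩, hx⟩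
      · by_cases hjm : j = m+1
        · rw [hjm] at hx; left; right; exact ⟨⟨⟨hi1, by omega⟩, hx⟩, hjm⟩
        · left; left; exact ⟨⟨hi1, by omega⟩, by omega, hj2⟩
    · rintro ((⟨⟨hi1, hi2⟩, hj1, hj2⟩ | ⟨⟨⟨hi1, hi2⟩, hx⟩, hj⟩) | ⟨hi, ⟨hj1, hj2⟩, hx⟩)
      · exact ⟨⟨⟨hi1, by omega⟩, by omega, hj2⟩,
          lt_of_le_of_lt (hA i hi1 hi2) (lt_of_lt_of_le hM (hB j hj1 hj2))⟩
      · rw [hj]; exact ⟨⟨⟨hi1, by omega⟩, by omega, by omega⟩, hx⟩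
      · rw [hi]; exact ⟨⟨⟨by omega, le_rfl⟩, by omega, hj2⟩, hx⟩
  rw [hset, Finset.card_union_of_disjoint, Finset.card_union_of_disjoint]
  · simp only [Finset.card_product, Finset.card_singleton, Nat.card_Icc,
      mul_one, one_mul]
    have : (m - 1 + 1 - 1) * (m + n + 1 - (m + 2)) = (m-1) * (n-1) := by
      congr 1 <;> omega
    rw [this]
  · rw [Finset.disjoint_left]
    rintro ⟨i, j⟩ hij hij'
    simp only [Finset.mem_product, Finset.mem_Icc, Finset.mem_filter,
      Finset.mem_singleton] at hij hij'
    omega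
  · rw [Finset.disjoint_left]
    rintro ⟨i, j⟩ hij hij'
    simp only [Finset.mem_union, Finset.mem_product, Finset.mem_Icc, Finset.mem_filter,
      Finset.mem_singleton] at hij hij'
    omega
end

section
/- Let n ≥ 3 and let x : Fin n → ℝ satisfy x_1 ≤ ⋯ ≤ x_n, and suppose there is exactly one pair (i,j) with 1 ≤ i ≤ j ≤ n and x_i + x_j > 0. Then that pair is (n,n) (i.e. x_n > 0), x_j < 0 for all j < n, and #{(i,j) : 1 ≤ i ≤ j ≤ n, x_i + x_j < 0} = s + n(n−1)/2, where s = #{j : 1 ≤ j ≤ n−1, x_j < −x_n}. -/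
/-!
A positive value `x i + x j` with `i ≤ j` forces `x n + x n > 0` by monotonicity, so the unique
positive pair is `(n, n)` and `x j + x n ≤ 0` for `j < n`. Then every pair inside `{1, …, n-1}`
is negative (`x i + x j ≤ 2 x j < 0`), while a pair `(j, n)` with `j < n` is negative exactly
when `x j < -x n`. The pairs `i ≤ j` of an `m`-element set correspond to its unordered pairs,
so there are `(m + 1).choose 2` of them.
-/

open Finset

theorem Finset.card_filter_le_product_self {α : Type*} [LinearOrder α] (s : Finset α) :
    #{p ∈ s ×ˢ s | p.1 ≤ p.2} = (#s + 1).choose 2 := by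
  rw [← card_sym2]
  refine card_nbij (fun p => s(p.1, p.2)) ?_ ?_ ?_
  · rintro ⟨a, b⟩ h
    simp only [coe_filter, mem_product, Set.mem_ofPred_eq] at h
    simpa using h.1
  · rintro ⟨a, b⟩ h ⟨c, d⟩ h'
    simp only [coe_filter, mem_product, Set.mem_ofPred_eq] at h h'
    simp only [Sym2.eq_iff, Prod.mk.injEq]
    rintro (h | ⟨rfl, rfl⟩) <;> grind
  · intro z hz
    induction z using Sym2.inductionOn with
    | hf a b =>
      rw [mem_coe, mk_mem_sym2_iff] at hz
      refine ⟨(min a b, max a b), ?_, ?_⟩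
      · simp only [coe_filter, mem_product, Set.mem_ofPred_eq]
        rcases le_total a b with h | h <;> simp [h, hz.1, hz.2]
      · rcases le_total a b with h | h <;> simp [h, Sym2.eq_swap]

theorem card_filter_Icc_product_eq_add_card_last_column (n : ℕ) (P : ℕ × ℕ → Prop)
    [DecidablePred P] :
    #{p ∈ Icc 1 n ×ˢ Icc 1 n | p.1 ≤ p.2 ∧ P p} =
      #{p ∈ Icc 1 (n - 1) ×ˢ Icc 1 (n - 1) | p.1 ≤ p.2 ∧ P p} + #{i ∈ Icc 1 n | P (i, n)} := by
  rw [← card_map (s := {i ∈ Icc 1 n | P (i, n)}) ⟨(·, n), Prod.mk_left_injective n⟩,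
    ← card_union_of_disjoint]
  · congr 1
    ext ⟨i, j⟩
    simp only [mem_filter, mem_product, mem_Icc, mem_union, mem_map, Function.Embedding.coeFn_mk,
      Prod.mk.injEq]
    constructor
    · rintro ⟨⟨⟨hi, -⟩, hj, hjn⟩, hij, hP⟩
      rcases lt_or_eq_of_le hjn with hjn | rfl
      · exact .inl ⟨⟨⟨hi, by omega⟩, hj, by omega⟩, hij, hP⟩
      · exact .inr ⟨i, ⟨⟨hi, hij⟩, hP⟩, rfl, rfl⟩
    · rintro (⟨⟨⟨hi, -⟩, hj, hjn⟩, hij, hP⟩ | ⟨i, ⟨⟨hi, hin⟩, hP⟩, rfl, rfl⟩)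
      · exact ⟨⟨⟨hi, by omega⟩, hj, by omega⟩, hij, hP⟩
      · exact ⟨⟨⟨hi, hin⟩, by omega, le_rfl⟩, hin, hP⟩
  · simp only [disjoint_left, mem_filter, mem_product, mem_Icc, mem_map]
    rintro _ ⟨⟨-, hj, hjn⟩, -⟩ ⟨i, -, rfl⟩
    simp only [Function.Embedding.coeFn_mk] at hj hjn
    omega

theorem stmt6_general (n : ℕ) (x : ℕ → ℝ)
    (hmono : ∀ i j, 1 ≤ i → i ≤ j → j ≤ n → x i ≤ x j)
    (huniq : ((Finset.Icc 1 n ×ˢ Finset.Icc 1 n).filter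
        (fun p => p.1 ≤ p.2 ∧ 0 < x p.1 + x p.2)).card = 1) :
    0 < x n ∧ (∀ j, 1 ≤ j → j < n → x j < 0) ∧
    ((Finset.Icc 1 n ×ˢ Finset.Icc 1 n).filter
        (fun p => p.1 ≤ p.2 ∧ x p.1 + x p.2 < 0)).card
      = ((Finset.Icc 1 (n-1)).filter (fun j => x j < -x n)).card + n*(n-1)/2 := by
  obtain ⟨⟨i, j⟩, hmem⟩ := card_pos.mp (huniq ▸ Nat.one_pos)
  simp only [mem_filter, mem_product, mem_Icc] at hmem
  obtain ⟨⟨⟨hi, hin⟩, -, hjn⟩, hij, hpos⟩ := hmem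
  have hxn : 0 < x n := by
    linarith [hmono i n hi hin le_rfl, hmono j n (hi.trans hij) hjn le_rfl]
  have hlast : ∀ k, 1 ≤ k → k < n → x k + x n ≤ 0 := by
    intro k hk hkn
    by_contra! h
    refine hkn.ne (congrArg Prod.fst (card_le_one.mp huniq.le (k, n) ?_ (n, n) ?_)) <;>
      simp only [mem_filter, mem_product, mem_Icc]
    · exact ⟨⟨⟨hk, hkn.le⟩, by omega, le_rfl⟩, hkn.le, h⟩
    · exact ⟨⟨⟨by omega, le_rfl⟩, by omega, le_rfl⟩, le_rfl, by linarith⟩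
  refine ⟨hxn, fun k hk hkn => by linarith [hlast k hk hkn], ?_⟩
  have hblock : {p ∈ Icc 1 (n - 1) ×ˢ Icc 1 (n - 1) | p.1 ≤ p.2 ∧ x p.1 + x p.2 < 0} =
      {p ∈ Icc 1 (n - 1) ×ˢ Icc 1 (n - 1) | p.1 ≤ p.2} := by
    refine filter_congr fun ⟨a, b⟩ hab => and_iff_left_of_imp fun hle => ?_
    simp only [mem_product, mem_Icc] at hab
    linarith [hmono a b hab.1.1 hle (by omega), hlast b hab.2.1 (by omega)]
  have hcol : {k ∈ Icc 1 n | x k + x n < 0} = {k ∈ Icc 1 (n - 1) | x k < -x n} := by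
    rw [← insert_Icc_sub_one_right_eq_Icc (by omega : 1 ≤ n), filter_insert,
      if_neg (by linarith)]
    exact filter_congr fun k _ => lt_neg_iff_add_neg.symm
  rw [card_filter_Icc_product_eq_add_card_last_column n (fun p => x p.1 + x p.2 < 0), hblock,
    card_filter_le_product_self, hcol, Nat.card_Icc, ← Nat.choose_two_right, add_comm]
  congr 2
  omega

/-- Type CI, G = Sp(n,ℝ), case R⁺ = 1: if there is exactly one pair (i,j),
i ≤ j, with x_i + x_j > 0, then that pair is (n,n) (so x_n > 0), x_j < 0 for
j < n, and #{(i,j) : i ≤ j, x_i + x_j < 0} = s + n(n−1)/2 with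
s = #{j ≤ n−1 : x_j < −x_n}. -/
theorem stmt6 (n : ℕ) (hn : 3 ≤ n) (x : ℕ → ℝ)
    (hmono : ∀ i j, 1 ≤ i → i ≤ j → j ≤ n → x i ≤ x j)
    (huniq : ((Finset.Icc 1 n ×ˢ Finset.Icc 1 n).filter
        (fun p => p.1 ≤ p.2 ∧ 0 < x p.1 + x p.2)).card = 1) :
    0 < x n ∧ (∀ j, 1 ≤ j → j < n → x j < 0) ∧
    ((Finset.Icc 1 n ×ˢ Finset.Icc 1 n).filter
        (fun p => p.1 ≤ p.2 ∧ x p.1 + x p.2 < 0)).card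
      = ((Finset.Icc 1 (n-1)).filter (fun j => x j < -x n)).card + n*(n-1)/2 :=
  stmt6_general n x hmono huniq
end

section
/- Let n ≥ 4 and let x : Fin n → ℝ be nonzero with x_1 ≤ ⋯ ≤ x_n, x_n = 0, and x_i + x_j ≤ 0 for all 1 ≤ i < j ≤ n. Let s be the smallest index with x_s = 0. Then 2 ≤ s ≤ n and #{(i,j) : 1 ≤ i < j ≤ n, x_i + x_j < 0} = (s−1)(2n − s)/2. -/
/-! The hypotheses force `x i < 0` for `1 ≤ i < s` and `x j = 0` for `s ≤ j ≤ n` (a zero at `s`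
makes every later `x j` both `≥ 0` by monotonicity and `≤ 0` by `x s + x j ≤ 0`). Hence for
`i < j` the sum `x i + x j` is negative exactly when `i < s`, and counting those pairs row by
row gives `∑_{i=1}^{s-1} (n - i) = (s - 1)(2n - s)/2`. -/

open Finset

section SignPattern

variable {x : ℕ → ℝ} {n s : ℕ}

theorem eq_zero_of_le_of_eq_zero (hmono : ∀ i j, 1 ≤ i → i ≤ j → j ≤ n → x i ≤ x j)
    (hneg : ∀ i j, 1 ≤ i → i < j → j ≤ n → x i + x j ≤ 0) (hs : 1 ≤ s) (hxs : x s = 0)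
    {j : ℕ} (hsj : s ≤ j) (hjn : j ≤ n) : x j = 0 := by
  rcases hsj.eq_or_lt with rfl | hlt
  · exact hxs
  · linarith [hneg s j hs hlt hjn, hmono s j hs hsj hjn]

theorem neg_of_lt_of_eq_zero (hmono : ∀ i j, 1 ≤ i → i ≤ j → j ≤ n → x i ≤ x j)
    (hsn : s ≤ n) (hxs : x s = 0) (hmin : ∀ j, 1 ≤ j → j < s → x j ≠ 0)
    {i : ℕ} (hi : 1 ≤ i) (his : i < s) : x i < 0 :=
  lt_of_le_of_ne (hxs ▸ hmono i s hi his.le hsn) (hmin i hi his)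

theorem add_neg_iff_lt_of_eq_zero (hmono : ∀ i j, 1 ≤ i → i ≤ j → j ≤ n → x i ≤ x j)
    (hneg : ∀ i j, 1 ≤ i → i < j → j ≤ n → x i + x j ≤ 0) (hs : 1 ≤ s) (hsn : s ≤ n)
    (hxs : x s = 0) (hmin : ∀ j, 1 ≤ j → j < s → x j ≠ 0)
    {i j : ℕ} (hi : 1 ≤ i) (hij : i < j) (hjn : j ≤ n) : x i + x j < 0 ↔ i < s := by
  constructor
  · intro hsum
    by_contra! hsi
    have hxi := eq_zero_of_le_of_eq_zero hmono hneg hs hxs hsi (by omega)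
    have hxj := eq_zero_of_le_of_eq_zero hmono hneg hs hxs (hsi.trans hij.le) hjn
    linarith
  · intro his
    have hxi := neg_of_lt_of_eq_zero hmono hsn hxs hmin hi his
    have hxj : x j ≤ 0 := by
      rcases lt_or_ge j s with hjs | hsj
      · exact (neg_of_lt_of_eq_zero hmono hsn hxs hmin (by omega) hjs).le
      · exact (eq_zero_of_le_of_eq_zero hmono hneg hs hxs hsj hjn).le
    linarith

end SignPattern

theorem card_filter_lt_fst_lt (n s : ℕ) :
    #{p ∈ Icc 1 n ×ˢ Icc 1 n | p.1 < p.2 ∧ p.1 < s} = ∑ i ∈ Ico 1 s, (n - i) := by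
  rw [card_eq_sum_card_fiberwise (f := Prod.fst) (t := Ico 1 s) fun p hp => by
    simp only [coe_filter, mem_product, mem_Icc, Set.mem_ofPred_eq, coe_Ico, Set.mem_Ico] at hp ⊢
    omega]
  refine sum_congr rfl fun i hi => ?_
  have hfiber : {p ∈ {p ∈ Icc 1 n ×ˢ Icc 1 n | p.1 < p.2 ∧ p.1 < s} | p.1 = i} =
      {i} ×ˢ Ioc i n := by
    ext ⟨a, b⟩
    simp only [mem_Ico] at hi
    simp only [mem_filter, mem_product, mem_Icc, mem_Ioc, mem_singleton]
    omega
  rw [hfiber, card_product, card_singleton, Nat.card_Ioc, one_mul]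

theorem two_mul_sum_Ico_sub {n s : ℕ} (hsn : s ≤ n + 1) :
    2 * ∑ i ∈ Ico 1 s, (n - i) = (s - 1) * (2 * n - s) := by
  induction s with
  | zero => simp
  | succ s ih =>
    rcases s with _ | s
    · simp
    rw [sum_Ico_succ_top (by omega), mul_add, ih (by omega)]
    simp only [Nat.add_sub_cancel]
    zify [show s + 1 ≤ n by omega, show s + 1 ≤ 2 * n by omega, show s + 1 + 1 ≤ 2 * n by omega]
    ring

theorem stmt7_general (n : ℕ) (x : ℕ → ℝ)
    (hx : ∃ j ∈ Finset.Icc 1 n, x j ≠ 0)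
    (hmono : ∀ i j, 1 ≤ i → i ≤ j → j ≤ n → x i ≤ x j)
    (hneg : ∀ i j, 1 ≤ i → i < j → j ≤ n → x i + x j ≤ 0)
    (s : ℕ) (hs : 1 ≤ s) (hsn : s ≤ n) (hxs : x s = 0)
    (hmin : ∀ j, 1 ≤ j → j < s → x j ≠ 0) :
    2 ≤ s ∧ s ≤ n ∧
    ((Finset.Icc 1 n ×ˢ Finset.Icc 1 n).filter
        (fun p => p.1 < p.2 ∧ x p.1 + x p.2 < 0)).card = (s-1) * (2*n - s) / 2 := by
  have hs2 : 2 ≤ s := by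
    by_contra! hs1
    obtain ⟨j, hj, hxj⟩ := hx
    rw [mem_Icc] at hj
    exact hxj (eq_zero_of_le_of_eq_zero hmono hneg hs hxs (by omega) hj.2)
  have hpairs : (Icc 1 n ×ˢ Icc 1 n).filter (fun p => p.1 < p.2 ∧ x p.1 + x p.2 < 0) =
      {p ∈ Icc 1 n ×ˢ Icc 1 n | p.1 < p.2 ∧ p.1 < s} := by
    refine filter_congr fun p hp => and_congr_right fun hlt => ?_
    simp only [mem_product, mem_Icc] at hp
    exact add_neg_iff_lt_of_eq_zero hmono hneg hs hsn hxs hmin hp.1.1 hlt hp.2.2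
  refine ⟨hs2, hsn, ?_⟩
  have hcount := two_mul_sum_Ico_sub (n := n) (s := s) (by omega)
  rw [hpairs, card_filter_lt_fst_lt]
  omega

/-- Type DIII, G = SO*(2n), a case of R⁺ = 0: if x is nonzero, increasing,
x_n = 0, x_i + x_j ≤ 0 for i < j, and s is the smallest index with x_s = 0,
then 2 ≤ s ≤ n and #{(i,j) : i < j, x_i + x_j < 0} = (s−1)(2n−s)/2. -/
theorem stmt7 (n : ℕ) (hn : 4 ≤ n) (x : ℕ → ℝ)
    (hx : ∃ j ∈ Finset.Icc 1 n, x j ≠ 0)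
    (hmono : ∀ i j, 1 ≤ i → i ≤ j → j ≤ n → x i ≤ x j)
    (hxn : x n = 0)
    (hneg : ∀ i j, 1 ≤ i → i < j → j ≤ n → x i + x j ≤ 0)
    (s : ℕ) (hs : 1 ≤ s) (hsn : s ≤ n) (hxs : x s = 0)
    (hmin : ∀ j, 1 ≤ j → j < s → x j ≠ 0) :
    2 ≤ s ∧ s ≤ n ∧
    ((Finset.Icc 1 n ×ˢ Finset.Icc 1 n).filter
        (fun p => p.1 < p.2 ∧ x p.1 + x p.2 < 0)).card = (s-1) * (2*n - s) / 2 :=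
  stmt7_general n x hx hmono hneg s hs hsn hxs hmin
end

section
/- Let m ≥ 2 and let x : Fin m → ℝ be nonzero with x_2 ≥ x_3 ≥ ⋯ ≥ x_m ≥ 0, and suppose x_1 ≤ 0, x_1 + x_j ≤ 0 and x_1 − x_j ≤ 0 for all 2 ≤ j ≤ m. Then x_1 < 0, and setting c = #{j : 2 ≤ j ≤ m, x_j = −x_1}, the quantity R⁻ := #{j ≥ 2 : x_1 − x_j < 0} + #{j ≥ 2 : x_1 + x_j < 0} + (1 if x_1 < 0 else 0) equals 2m − 1 − c; in particular m ≤ R⁻ ≤ 2m − 1. -/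
/-!
Every `x j` with `j ≥ 2` is squeezed into `[0, -x 1]`. Hence `x 1 = 0` would force `x = 0`, and
once `x 1 < 0`, each `x 1 - x j` is negative while `x 1 + x j` is negative exactly when `x j ≠ -x 1`,
so the three counts are `m - 1`, `m - 1 - c` and `1`.
-/

open Finset

theorem card_filter_add_lt_zero_add_card_filter_eq_neg {ι α : Type*} [AddCommGroup α]
    [LinearOrder α] [IsOrderedAddMonoid α] (s : Finset ι) (f : ι → α) (a : α) (h : ∀ j ∈ s, a + f j ≤ 0) :
    #(s.filter fun j => a + f j < 0) + #(s.filter fun j => f j = -a) = #s := by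
  rw [← card_filter_add_card_filter_not (s := s) (fun j => a + f j < 0)]
  congr 2
  refine filter_congr fun j hj => ?_
  rw [not_lt, eq_neg_iff_add_eq_zero, add_comm]
  exact ⟨fun heq => heq.ge, fun hle => le_antisymm (h j hj) hle⟩

theorem stmt8_general (m : ℕ) (x : ℕ → ℝ)
    (hx : ∃ j ∈ Finset.Icc 1 m, x j ≠ 0)
    (hanti : ∀ i j, 2 ≤ i → i ≤ j → j ≤ m → x j ≤ x i)
    (hlast : 0 ≤ x m)
    (h1 : x 1 ≤ 0)
    (hplus : ∀ j, 2 ≤ j → j ≤ m → x 1 + x j ≤ 0)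
    (hminus : ∀ j, 2 ≤ j → j ≤ m → x 1 - x j ≤ 0) :
    x 1 < 0 ∧
    (let c := ((Finset.Icc 2 m).filter (fun j => x j = -x 1)).card
     let R := ((Finset.Icc 2 m).filter (fun j => x 1 - x j < 0)).card +
              ((Finset.Icc 2 m).filter (fun j => x 1 + x j < 0)).card +
              (if x 1 < 0 then 1 else 0)
     R = 2*m - 1 - c ∧ m ≤ R ∧ R ≤ 2*m - 1) := by
  obtain ⟨j₀, hj₀, hxj₀⟩ := hx
  have hm : 1 ≤ m := (mem_Icc.mp hj₀).1.trans (mem_Icc.mp hj₀).2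
  have hnonneg : ∀ j ∈ Icc 2 m, 0 ≤ x j := fun j hj =>
    hlast.trans (hanti j m (mem_Icc.mp hj).1 (mem_Icc.mp hj).2 le_rfl)
  have hx1 : x 1 < 0 := by
    refine h1.lt_of_ne fun h0 => hxj₀ ?_
    obtain rfl | h2 : j₀ = 1 ∨ 2 ≤ j₀ := by grind
    · exact h0
    · have := hplus j₀ h2 (mem_Icc.mp hj₀).2
      have := hminus j₀ h2 (mem_Icc.mp hj₀).2
      linarith
  refine ⟨hx1, ?_⟩
  have hall : (Icc 2 m).filter (fun j => x 1 - x j < 0) = Icc 2 m :=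
    filter_true_of_mem fun j hj => by linarith [hnonneg j hj]
  have hsplit := card_filter_add_lt_zero_add_card_filter_eq_neg (Icc 2 m) x (x 1)
    fun j hj => hplus j (mem_Icc.mp hj).1 (mem_Icc.mp hj).2
  have hc := card_filter_le (Icc 2 m) fun j => x j = -x 1
  simp only [hall, if_pos hx1, Nat.card_Icc] at hsplit hc ⊢
  omega

/-- Type BDI, G = SO₀(2, 2m−1), case R⁺ = 0: under the stated hypotheses
x₁ < 0 and, with c = #{j ≥ 2 : x_j = −x₁}, the count
R⁻ = #{j ≥ 2 : x₁ − x_j < 0} + #{j ≥ 2 : x₁ + x_j < 0} + (1 if x₁ < 0)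
equals 2m − 1 − c; in particular m ≤ R⁻ ≤ 2m − 1. -/
theorem stmt8 (m : ℕ) (hm : 2 ≤ m) (x : ℕ → ℝ)
    (hx : ∃ j ∈ Finset.Icc 1 m, x j ≠ 0)
    (hanti : ∀ i j, 2 ≤ i → i ≤ j → j ≤ m → x j ≤ x i)
    (hlast : 0 ≤ x m)
    (h1 : x 1 ≤ 0)
    (hplus : ∀ j, 2 ≤ j → j ≤ m → x 1 + x j ≤ 0)
    (hminus : ∀ j, 2 ≤ j → j ≤ m → x 1 - x j ≤ 0) :
    x 1 < 0 ∧
    (let c := ((Finset.Icc 2 m).filter (fun j => x j = -x 1)).card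
     let R := ((Finset.Icc 2 m).filter (fun j => x 1 - x j < 0)).card +
              ((Finset.Icc 2 m).filter (fun j => x 1 + x j < 0)).card +
              (if x 1 < 0 then 1 else 0)
     R = 2*m - 1 - c ∧ m ≤ R ∧ R ≤ 2*m - 1) :=
  stmt8_general m x hx hanti hlast h1 hplus hminus
end

section
/- Let A = {a ∈ {0,1}⁵ : a_1 + a_2 + a_3 + a_4 + a_5 is even}. For x ∈ ℝ⁶ (coordinates x_1,…,x_6) and a ∈ A set a(x) = Σ_{j=1}^{5} (−1)^{a_j} x_j. Suppose x ≠ 0, x_1 ≥ x_2 ≥ x_3 ≥ x_4 ≥ |x_5|, and a(x) ≤ 3x_6 for all a ∈ A. Then #{a ∈ A : a(x) < 3x_6} ∈ {8, 11, 12, 13, 14, 15, 16}. Moreover each of these seven values is attained for some such x. -/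
/-!
Write `0` for the tuple with no sign flips. Flipping the signs in a set `S` lowers `aval · x` by
`2 ∑_{j ∈ S} x j`, and for `|S|` even this is nonnegative when `x 0 ≥ x 1 ≥ x 2 ≥ x 3 ≥ |x 4|`.
So `0` maximises `aval · x` on `A5`, and the set of `a` with `aval a x = 3 * x 5` is either empty
(count 16) or the set of maximisers, i.e. the flips of total weight zero. There are at most five of
these if `x 3 > 0`, at most four if `x 3 = 0 < x 1`, and exactly the eight with `a 0 = false` if
`x 1 = 0 < x 0`, while `x 0 = 0` would force `x = 0`. The seven values are attained at integer
points, where the count is a finite computation.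
-/

/-- The index set A ⊆ {0,1}⁵ of tuples with an even number of ones. -/
def A5 : Finset (Fin 5 → Bool) :=
  Finset.univ.filter (fun a => Even ((Finset.univ.filter (fun j => a j)).card))

/-- a(x) = Σ_{j=1}^{5} (−1)^{a_j} x_j for x ∈ ℝ⁶. -/
noncomputable def aval (a : Fin 5 → Bool) (x : Fin 6 → ℝ) : ℝ :=
  ∑ j : Fin 5, (if a j then (-1 : ℝ) else 1) * x (Fin.castSucc j)

open Finset

lemma card_filter_lt_add_card_filter_eq {α β : Type*} [LinearOrder β] {s : Finset α} {f : α → β}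
    {c : β} (h : ∀ a ∈ s, f a ≤ c) :
    #(s.filter (f · < c)) + #(s.filter (f · = c)) = #s := by
  rw [← card_filter_add_card_filter_not (s := s) (f · < c)]
  congr 2
  exact filter_congr fun a ha => by simp [(h a ha).ge_iff_eq, eq_comm]

lemma filter_eq_eq_empty_or_of_isMaxOn {α β : Type*} [LinearOrder β] {s : Finset α}
    {f : α → β} {a₀ : α} {c : β} (hmax : IsMaxOn f s a₀) (hc : f a₀ ≤ c) :
    s.filter (f · = c) = ∅ ∨ (f a₀ = c ∧ s.filter (f · = c) = s.filter (f · = f a₀)) := by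
  rcases hc.lt_or_eq with hlt | heq
  · exact .inl <| filter_eq_empty_iff.2 fun a ha => ((isMaxOn_iff.1 hmax a ha).trans_lt hlt).ne
  · exact .inr ⟨heq, by rw [heq]⟩

lemma card_A5 : #A5 = 16 := by decide

/-- Dominance for the root system `D₅`, read on the first five coordinates. -/
def IsDominant (x : Fin 6 → ℝ) : Prop :=
  x 1 ≤ x 0 ∧ x 2 ≤ x 1 ∧ x 3 ≤ x 2 ∧ |x 4| ≤ x 3

namespace IsDominant

variable {x : Fin 6 → ℝ}

lemma isMaxOn_aval (hx : IsDominant x) : IsMaxOn (aval · x) A5 (fun _ => false) := by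
  obtain ⟨h1, h2, h3, h4⟩ := hx
  obtain ⟨h4l, h4r⟩ := abs_le.1 h4
  refine isMaxOn_iff.2 fun a ha => ?_
  rw [mem_coe] at ha
  fin_cases ha <;> simp +decide [aval, Fin.sum_univ_five] <;> linarith

lemma card_maximisers_le_five (hx : IsDominant x) (hx3 : 0 < x 3) :
    #(A5.filter (aval · x = aval (fun _ => false) x)) ≤ 5 := by
  obtain ⟨h1, h2, h3, h4⟩ := hx
  obtain ⟨h4l, h4r⟩ := abs_le.1 h4
  calc _ ≤ #(A5.filter fun a => #{j : Fin 4 | a j.castSucc} ≤ 1) := by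
        refine card_le_card fun a => ?_
        simp only [mem_filter, and_imp]
        intro ha hv
        refine ⟨ha, ?_⟩
        fin_cases ha <;> simp +decide [aval, Fin.sum_univ_five] at hv ⊢ <;> linarith
    _ = 5 := by decide

lemma card_maximisers_le_four (hx : IsDominant x) (hx3 : x 3 = 0) (hx1 : 0 < x 1) :
    #(A5.filter (aval · x = aval (fun _ => false) x)) ≤ 4 := by
  obtain ⟨h1, h2, h3, h4⟩ := hx
  have hx4 : x 4 = 0 := abs_nonpos_iff.1 (hx3 ▸ h4)
  calc _ ≤ #(A5.filter fun a => a 0 = false ∧ a 1 = false) := by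
        refine card_le_card fun a => ?_
        simp only [mem_filter, and_imp]
        intro ha hv
        refine ⟨ha, ?_⟩
        fin_cases ha <;> simp +decide [aval, Fin.sum_univ_five, hx3, hx4] at hv ⊢ <;> linarith
    _ = 4 := by decide

lemma card_maximisers_eq_eight (hx : IsDominant x) (hx1 : x 1 = 0) (hx0 : 0 < x 0) :
    #(A5.filter (aval · x = aval (fun _ => false) x)) = 8 := by
  obtain ⟨-, h2, h3, h4⟩ := hx
  have hx2 : x 2 = 0 := le_antisymm (hx1 ▸ h2) (abs_nonneg _ |>.trans h4 |>.trans h3)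
  have hx3 : x 3 = 0 := le_antisymm (hx2 ▸ h3) (abs_nonneg _ |>.trans h4)
  have hx4 : x 4 = 0 := abs_nonpos_iff.1 (hx3 ▸ h4)
  calc _ = #(A5.filter fun a => a 0 = false) := by
        congr 1
        refine filter_congr fun a ha => ?_
        fin_cases ha <;>
          simp +decide [aval, Fin.sum_univ_five, hx1, hx2, hx3, hx4, CharZero.neg_eq_self_iff,
            hx0.ne']
    _ = 8 := by decide

lemma card_maximisers_le_five_or_eq_eight (hx : IsDominant x) (hx0 : 0 < x 0) :
    #(A5.filter (aval · x = aval (fun _ => false) x)) ≤ 5 ∨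
      #(A5.filter (aval · x = aval (fun _ => false) x)) = 8 := by
  obtain ⟨-, h2, h3, h4⟩ := id hx
  rcases (abs_nonneg _ |>.trans h4).lt_or_eq with hx3 | hx3
  · exact .inl (hx.card_maximisers_le_five hx3)
  rcases (hx3.le.trans (h3.trans h2)).lt_or_eq with hx1 | hx1
  · exact .inl ((hx.card_maximisers_le_four hx3.symm hx1).trans (by norm_num))
  · exact .inr (hx.card_maximisers_eq_eight hx1.symm hx0)

lemma pos_of_ne_zero_of_aval_eq (hx : IsDominant x) (hne : x ≠ 0)
    (htop : aval (fun _ => false) x = 3 * x 5) : 0 < x 0 := by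
  obtain ⟨h1, h2, h3, h4⟩ := hx
  by_contra! hx0
  have hx4 : x 4 = 0 := abs_nonpos_iff.1 (by linarith)
  have hx3 : x 3 = 0 := by linarith [abs_nonneg (x 4)]
  have hx2 : x 2 = 0 := by linarith
  have hx1 : x 1 = 0 := by linarith
  have hx0 : x 0 = 0 := by linarith
  have hx5 : x 5 = 0 := by
    simpa [aval, Fin.sum_univ_five, hx0, hx1, hx2, hx3, hx4] using htop
  exact hne (funext fun i => by fin_cases i <;> assumption)

end IsDominant

/-- `aval` over `ℤ`, so that integer witnesses can be checked by `decide`. -/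
def intAval (a : Fin 5 → Bool) (z : Fin 6 → ℤ) : ℤ :=
  ∑ j : Fin 5, (if a j then -1 else 1) * z (Fin.castSucc j)

lemma aval_intCast (a : Fin 5 → Bool) (z : Fin 6 → ℤ) :
    aval a (fun i => (z i : ℝ)) = intAval a z := by
  simp only [aval, intAval]
  push_cast
  rfl

lemma exists_of_int_witness (z : Fin 6 → ℤ) (k : ℕ)
    (hz : z ≠ 0 ∧ z 1 ≤ z 0 ∧ z 2 ≤ z 1 ∧ z 3 ≤ z 2 ∧ |z 4| ≤ z 3 ∧
      (∀ a ∈ A5, intAval a z ≤ 3 * z 5) ∧ #(A5.filter (intAval · z < 3 * z 5)) = k) :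
    ∃ y : Fin 6 → ℝ, y ≠ 0 ∧
      y 1 ≤ y 0 ∧ y 2 ≤ y 1 ∧ y 3 ≤ y 2 ∧ |y 4| ≤ y 3 ∧
      (∀ a ∈ A5, aval a y ≤ 3 * y 5) ∧
      (A5.filter (fun a => aval a y < 3 * y 5)).card = k := by
  obtain ⟨hne, h1, h2, h3, h4, hle, hcard⟩ := hz
  refine ⟨fun i => (z i : ℝ), fun h => hne (funext fun i => ?_), ?_, ?_, ?_, ?_, fun a ha => ?_, ?_⟩
  · simpa using congrFun h i
  all_goals dsimp only
  · exact_mod_cast h1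
  · exact_mod_cast h2
  · exact_mod_cast h3
  · exact_mod_cast h4
  · rw [aval_intCast]
    exact_mod_cast hle a ha
  · rw [← hcard]
    congr 1
    exact filter_congr fun a _ => by rw [aval_intCast]; norm_cast

/-- Type EIII, case R⁺ = 0: if x ≠ 0, x₁ ≥ x₂ ≥ x₃ ≥ x₄ ≥ |x₅| and
a(x) ≤ 3x₆ for all a ∈ A, then #{a ∈ A : a(x) < 3x₆} ∈ {8,11,12,13,14,15,16},
and each of these values is attained for some such x. -/
theorem stmt10 (x : Fin 6 → ℝ) (hx : x ≠ 0)
    (h1 : x 1 ≤ x 0) (h2 : x 2 ≤ x 1) (h3 : x 3 ≤ x 2) (h4 : |x 4| ≤ x 3)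
    (hle : ∀ a ∈ A5, aval a x ≤ 3 * x 5) :
    (A5.filter (fun a => aval a x < 3 * x 5)).card
      ∈ ({8, 11, 12, 13, 14, 15, 16} : Finset ℕ) ∧
    ∀ k ∈ ({8, 11, 12, 13, 14, 15, 16} : Finset ℕ), ∃ y : Fin 6 → ℝ, y ≠ 0 ∧
      y 1 ≤ y 0 ∧ y 2 ≤ y 1 ∧ y 3 ≤ y 2 ∧ |y 4| ≤ y 3 ∧
      (∀ a ∈ A5, aval a y ≤ 3 * y 5) ∧
      (A5.filter (fun a => aval a y < 3 * y 5)).card = k := by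
  refine ⟨?_, fun k hk => ?_⟩
  · have hdom : IsDominant x := ⟨h1, h2, h3, h4⟩
    have hsplit := card_filter_lt_add_card_filter_eq hle
    rw [card_A5] at hsplit
    rcases filter_eq_eq_empty_or_of_isMaxOn hdom.isMaxOn_aval (hle _ (by decide))
      with hE | ⟨htop, hE⟩
    · simp [← hsplit, hE]
    · rw [hE] at hsplit
      have := hdom.card_maximisers_le_five_or_eq_eight (hdom.pos_of_ne_zero_of_aval_eq hx htop)
      simp only [mem_insert, mem_singleton]
      omega
  · simp only [mem_insert, mem_singleton] at hk
    rcases hk with rfl | rfl | rfl | rfl | rfl | rfl | rfl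
    · exact exists_of_int_witness ![3, 0, 0, 0, 0, 1] _ (by decide)
    · exact exists_of_int_witness ![1, 1, 1, 1, -1, 1] _ (by decide)
    · exact exists_of_int_witness ![9, 3, 3, 3, -3, 5] _ (by decide)
    · exact exists_of_int_witness ![9, 9, 3, 3, -3, 7] _ (by decide)
    · exact exists_of_int_witness ![3, 3, 3, 1, -1, 3] _ (by decide)
    · exact exists_of_int_witness ![3, 3, 3, 3, 3, 5] _ (by decide)
    · exact exists_of_int_witness ![0, 0, 0, 0, 0, 1] _ (by decide)
end

section
/- Let A = {a ∈ {0,1}⁵ : Σ a_j even}. For x ∈ ℝ⁷ (coordinates x_1,…,x_7) consider the 27 real numbers: β_a(x) = (x_6 − 2x_7 − Σ_{j≤5}(−1)^{a_j} x_j)/2 for a ∈ A (16 numbers), x_6 + x_j and x_6 − x_j for 1 ≤ j ≤ 5 (10 numbers), and −2x_7 (1 number). Suppose x ≠ 0, x_1 ≥ x_2 ≥ x_3 ≥ x_4 ≥ |x_5|, and all 27 numbers are ≤ 0. Then the number of these 27 values that are strictly negative lies in {17, 21, 22, 23, 24, 25, 26, 27}, and each such value is attained for some such x. -/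
/-- The embedding Fin 5 → Fin 7 (indices x₁,…,x₅ among x₁,…,x₇). -/
def e57 (j : Fin 5) : Fin 7 := ⟨j, by omega⟩

/-- β_a(x) = (x₆ − 2x₇ − Σ_{j≤5} (−1)^{a_j} x_j)/2 for x ∈ ℝ⁷. -/
noncomputable def bval (a : Fin 5 → Bool) (x : Fin 7 → ℝ) : ℝ :=
  (x 5 - 2 * x 6 - ∑ j : Fin 5, (if a j then (-1 : ℝ) else 1) * x (e57 j)) / 2

/-- The number of the 27 functionals (16 of type β_a, 10 of type x₆ ± x_j,
and −2x₇) that are strictly negative at x. -/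
noncomputable def negCount (x : Fin 7 → ℝ) : ℕ :=
  (A5.filter (fun a => bval a x < 0)).card +
  ((Finset.univ : Finset (Fin 5)).filter (fun j => x 5 + x (e57 j) < 0)).card +
  ((Finset.univ : Finset (Fin 5)).filter (fun j => x 5 - x (e57 j) < 0)).card +
  (if -2 * x 6 < 0 then 1 else 0)


lemma A5_card : A5.card = 16 := by decide

lemma xor_mem : ∀ a b : Fin 5 → Bool, a ∈ A5 → b ∈ A5 → (fun j => xor (b j) (a j)) ∈ A5 := by decide

lemma pairFn_mem : ∀ i j : Fin 5, i ≠ j → (fun l => (decide (l = i) || decide (l = j))) ∈ A5 := by decide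

lemma countK : ∀ K : Finset (Fin 5), (A5.filter (fun b => ∀ j, b j = true → j ∈ K)).card = if K.card = 0 then 1 else 2^(K.card-1) := by decide

lemma countB : ∀ i : Fin 5, (A5.filter (fun b => (b i = true ∧ ((Finset.univ.erase i).filter (fun j => b j = true)).card = 1) ∨ (b i = false ∧ ((Finset.univ.erase i).filter (fun j => b j = true)).card = 0))).card = 5 := by decide

open Finset

lemma sum_bool_ite (b : Fin 5 → Bool) (v : Fin 5 → ℝ) :
    (∑ j, if b j then v j else 0) = ∑ j ∈ Finset.univ.filter (fun j => b j = true), v j := by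
  rw [Finset.sum_filter]

lemma sum_pairFn (v : Fin 5 → ℝ) (i j : Fin 5) (hij : i ≠ j) :
    (∑ l, if (decide (l = i) || decide (l = j) : Bool) then v l else 0) = v i + v j := by
  rw [sum_bool_ite]
  have : Finset.univ.filter (fun l => (decide (l = i) || decide (l = j) : Bool) = true) = {i, j} := by
    ext l; simp [Finset.mem_filter]
  rw [this, Finset.sum_pair hij]

lemma sum_bool_split (b : Fin 5 → Bool) (v : Fin 5 → ℝ) (i : Fin 5) :
    (∑ j, if b j then v j else 0) =
      (if b i then v i else 0) +
        ∑ j ∈ (Finset.univ.erase i).filter (fun j => b j = true), v j := by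
  rw [← Finset.add_sum_erase _ _ (Finset.mem_univ i)]
  congr 1
  rw [Finset.sum_filter]

lemma helper (v : Fin 5 → ℝ) (c t : ℝ) (hc : 0 < c) (ht : 0 ≤ t)
    (habs : ∀ j, |v j| ≤ c) (hsum : ∑ j, v j = -c - 2 * t)
    (hle : ∀ b ∈ A5, (∑ j, if b j then v j else 0) ≤ 0) :
    (A5.filter (fun b => (∑ j, if b j then v j else 0) = 0)).card +
      (Finset.univ.filter (fun j => |v j| = c)).card +
      (if t = 0 then 1 else 0) ≤ 6 ∨
    (A5.filter (fun b => (∑ j, if b j then v j else 0) = 0)).card +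
      (Finset.univ.filter (fun j => |v j| = c)).card +
      (if t = 0 then 1 else 0) = 10 := by
  classical
  have hpair : ∀ i j : Fin 5, i ≠ j → v i + v j ≤ 0 := by
    intro i j hij
    have h := hle _ (pairFn_mem i j hij)
    rwa [sum_pairFn v i j hij] at h
  by_cases hpos : ∃ i, 0 < v i
  · obtain ⟨i, hi⟩ := hpos
    have hneg : ∀ j, j ≠ i → v j ≤ -v i := fun j hj => by
      have := hpair i j (Ne.symm hj); linarith
    by_cases hci : v i = c
    · -- the z = 10 case
      right
      have hall : ∀ j, j ≠ i → v j = -c := fun j hj =>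
        le_antisymm (hci ▸ hneg j hj) (neg_le_of_abs_le (habs j))
      have hsplit : ∑ j, v j = v i + ∑ j ∈ Finset.univ.erase i, v j :=
        (Finset.add_sum_erase _ _ (Finset.mem_univ i)).symm
      have herase : ∑ j ∈ Finset.univ.erase i, v j = 4 * (-c) := by
        rw [Finset.sum_congr rfl (fun j hj => hall j (Finset.ne_of_mem_erase hj)),
          Finset.sum_const, Finset.card_erase_of_mem (Finset.mem_univ i)]
        rw [nsmul_eq_mul]; norm_num
      have htc : t = c := by
        rw [hsplit, herase, hci] at hsum; linarith
      have hZ : (if t = 0 then (1:ℕ) else 0) = 0 := by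
        rw [if_neg]; rw [htc]; exact hc.ne'
      have hP : (Finset.univ.filter (fun j => |v j| = c)).card = 5 := by
        rw [Finset.filter_true_of_mem, Finset.card_univ]
        · rfl
        · intro j _
          by_cases hj : j = i
          · rw [hj, hci, abs_of_pos hc]
          · rw [hall j hj, abs_neg, abs_of_pos hc]
      have hNf : A5.filter (fun b => (∑ j, if b j then v j else 0) = 0) =
          A5.filter (fun b => (b i = true ∧ ((Finset.univ.erase i).filter (fun j => b j = true)).card = 1) ∨
            (b i = false ∧ ((Finset.univ.erase i).filter (fun j => b j = true)).card = 0)) := by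
        apply Finset.filter_congr
        intro b _
        rw [sum_bool_split b v i]
        have hre : ∑ j ∈ (Finset.univ.erase i).filter (fun j => b j = true), v j =
            (((Finset.univ.erase i).filter (fun j => b j = true)).card : ℝ) * (-c) := by
          rw [Finset.sum_congr rfl
            (fun j hj => hall j (Finset.ne_of_mem_erase (Finset.mem_of_mem_filter j hj))),
            Finset.sum_const, nsmul_eq_mul]
        rw [hre]
        set r := ((Finset.univ.erase i).filter (fun j => b j = true)).card with hr
        cases hbi : b i <;> simp [hci]
        · intro h; exact absurd h hc.ne'
        · constructor
          · intro h
            have : (r : ℝ) = 1 := by nlinarith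
            exact_mod_cast this
          · intro h; rw [h]; push_cast; linarith
      rw [hNf, countB i, hP, hZ]
    · -- v i < c : bound by 6
      left
      have hvic : v i < c := lt_of_le_of_ne (le_of_abs_le (habs i)) hci
      set Q := (Finset.univ.erase i).filter (fun j => v j = -v i) with hQ
      have hsubset : A5.filter (fun b => (∑ j, if b j then v j else 0) = 0) ⊆
          insert (fun _ => false)
            (Q.image (fun j => (fun l => (decide (l = i) || decide (l = j) : Bool)))) := by
        intro b hbmem
        rw [Finset.mem_filter] at hbmem
        obtain ⟨hbA, hb0⟩ := hbmem
        rw [sum_bool_split b v i] at hb0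
        set R := (Finset.univ.erase i).filter (fun j => b j = true) with hR
        have hRle : ∀ j ∈ R, v j ≤ -v i := fun j hj =>
          hneg j (Finset.ne_of_mem_erase (Finset.mem_of_mem_filter j hj))
        have hRsum : ∑ j ∈ R, v j ≤ (R.card : ℝ) * (-v i) := by
          calc ∑ j ∈ R, v j ≤ ∑ _j ∈ R, (-v i) := Finset.sum_le_sum hRle
            _ = (R.card : ℝ) * (-v i) := by rw [Finset.sum_const, nsmul_eq_mul]
        cases hbi : b i
        · rw [hbi] at hb0; simp only [Bool.false_eq_true, if_false, zero_add] at hb0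
          have hR0 : R.card = 0 := by
            by_contra hne
            have h1 : (1:ℝ) ≤ (R.card : ℝ) := by
              exact_mod_cast Nat.one_le_iff_ne_zero.mpr hne
            nlinarith
          have hRe : R = ∅ := Finset.card_eq_zero.mp hR0
          apply Finset.mem_insert.mpr
          left
          funext l
          by_cases hl : l = i
          · rw [hl, hbi]
          · cases hb : b l
            · rfl
            · exfalso
              have hlR : l ∈ R := by
                rw [hR, Finset.mem_filter, Finset.mem_erase]
                exact ⟨⟨hl, Finset.mem_univ l⟩, hb⟩
              rw [hRe] at hlR
              exact absurd hlR (Finset.notMem_empty l)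
        · rw [hbi] at hb0; simp only [if_true] at hb0
          have hR1 : R.card = 1 := by
            have hle1 : (R.card : ℝ) ≤ 1 := by nlinarith
            have hne0 : R.card ≠ 0 := by
              intro h0
              rw [Finset.card_eq_zero.mp h0, Finset.sum_empty] at hb0
              linarith
            have hle1' : R.card ≤ 1 := by exact_mod_cast hle1
            omega
          obtain ⟨j, hj⟩ := Finset.card_eq_one.mp hR1
          have hjR : j ∈ R := hj ▸ Finset.mem_singleton_self j
          have hji : j ≠ i := Finset.ne_of_mem_erase (Finset.mem_of_mem_filter j hjR)
          have hsumR : ∑ l ∈ R, v l = v j := by rw [hj, Finset.sum_singleton]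
          have hvj : v j = -v i := by rw [hsumR] at hb0; linarith
          apply Finset.mem_insert.mpr
          right
          apply Finset.mem_image.mpr
          refine ⟨j, ?_, ?_⟩
          · rw [hQ, Finset.mem_filter, Finset.mem_erase]
            exact ⟨⟨hji, Finset.mem_univ j⟩, hvj⟩
          · funext l
            by_cases hl : l = i
            · subst hl; simp [hbi]
            · by_cases hlj : l = j
              · subst hlj
                have : b l = true := (Finset.mem_filter.mp hjR).2
                simp [this, hl]
              · have hbl : b l = false := by
                  cases hb : b l
                  · rfl
                  · exfalso
                    have : l ∈ R := by
                      rw [hR, Finset.mem_filter, Finset.mem_erase]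
                      exact ⟨⟨hl, Finset.mem_univ l⟩, hb⟩
                    rw [hj, Finset.mem_singleton] at this
                    exact hlj this
                simp [hbl, hl, hlj]
      have hN : (A5.filter (fun b => (∑ j, if b j then v j else 0) = 0)).card ≤ 1 + Q.card := by
        calc (A5.filter (fun b => (∑ j, if b j then v j else 0) = 0)).card
            ≤ (insert (fun _ => false) (Q.image (fun j => (fun l => (decide (l = i) || decide (l = j) : Bool))))).card :=
              Finset.card_le_card hsubset
          _ ≤ 1 + (Q.image _).card := by
              rw [add_comm]; exact Finset.card_insert_le _ _
          _ ≤ 1 + Q.card := by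
              exact Nat.add_le_add_left (Finset.card_image_le) 1
      have hPQ : (Finset.univ.filter (fun j => |v j| = c)).card + Q.card ≤ 4 := by
        have hPsub : (Finset.univ.filter (fun j => |v j| = c)) ⊆ Finset.univ.erase i := by
          intro j hjmem
          rw [Finset.mem_filter] at hjmem
          rw [Finset.mem_erase]
          refine ⟨?_, Finset.mem_univ j⟩
          intro hji
          rw [hji, abs_of_pos hi] at hjmem
          exact hci hjmem.2
        have hdisj : Disjoint (Finset.univ.filter (fun j => |v j| = c)) Q := by
          rw [Finset.disjoint_left]
          intro j hjP hjQ
          rw [Finset.mem_filter] at hjP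
          rw [hQ, Finset.mem_filter] at hjQ
          rw [hjQ.2, abs_neg, abs_of_pos hi] at hjP
          exact hci hjP.2
        calc (Finset.univ.filter (fun j => |v j| = c)).card + Q.card
            = ((Finset.univ.filter (fun j => |v j| = c)) ∪ Q).card :=
              (Finset.card_union_of_disjoint hdisj).symm
          _ ≤ (Finset.univ.erase i).card := by
              apply Finset.card_le_card
              apply Finset.union_subset hPsub
              rw [hQ]; exact Finset.filter_subset _ _
          _ = 4 := by rw [Finset.card_erase_of_mem (Finset.mem_univ i), Finset.card_univ]; rfl
      by_cases ht0 : t = 0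
      · rw [if_pos ht0]; linarith
      · rw [if_neg ht0]; linarith
  · -- all v j ≤ 0
    push_neg at hpos
    obtain ⟨K, hK⟩ : ∃ K, K = Finset.univ.filter (fun j => v j = 0) := ⟨_, rfl⟩
    have hNval : (A5.filter (fun b => (∑ j, if b j then v j else 0) = 0)).card
        = if K.card = 0 then 1 else 2 ^ (K.card - 1) := by
      have heq : A5.filter (fun b => (∑ j, if b j then v j else 0) = 0)
          = A5.filter (fun b => ∀ j, b j = true → j ∈ K) := by
        apply Finset.filter_congr
        intro b _
        have hnp : ∀ j ∈ Finset.univ, (if b j = true then v j else 0) ≤ 0 := by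
          intro j _
          by_cases hbj : b j = true
          · rw [if_pos hbj]; exact hpos j
          · rw [if_neg hbj]
        rw [Finset.sum_eq_zero_iff_of_nonpos hnp]
        constructor
        · intro h j hbj
          rw [hK, Finset.mem_filter]
          refine ⟨Finset.mem_univ j, ?_⟩
          have := h j (Finset.mem_univ j)
          rwa [if_pos hbj] at this
        · intro h j _
          by_cases hbj : b j = true
          · rw [if_pos hbj]
            have := h j hbj
            rw [hK, Finset.mem_filter] at this
            exact this.2
          · rw [if_neg hbj]
      rw [heq]; exact countK K
    have hPneg : ∀ j, |v j| = c → v j = -c := by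
      intro j hj
      rcases (abs_eq (le_of_lt hc)).mp hj with h | h
      · exfalso; have := hpos j; linarith
      · exact h
    have hPK : (Finset.univ.filter (fun j => |v j| = c)).card + K.card ≤ 5 := by
      have hdisj : Disjoint (Finset.univ.filter (fun j => |v j| = c)) K := by
        rw [Finset.disjoint_left]
        intro j hjP hjK
        rw [Finset.mem_filter] at hjP
        rw [hK, Finset.mem_filter] at hjK
        have := hPneg j hjP.2
        rw [hjK.2] at this
        exact absurd this.symm (by linarith : (-c:ℝ) ≠ 0)
      calc (Finset.univ.filter (fun j => |v j| = c)).card + K.card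
          = ((Finset.univ.filter (fun j => |v j| = c)) ∪ K).card :=
            (Finset.card_union_of_disjoint hdisj).symm
        _ ≤ (Finset.univ : Finset (Fin 5)).card :=
            Finset.card_le_card (Finset.subset_univ _)
        _ = 5 := by rw [Finset.card_univ]; rfl
    have hK5 : K.card ≤ 5 := by
      calc K.card ≤ (Finset.univ : Finset (Fin 5)).card := Finset.card_le_card (Finset.subset_univ _)
        _ = 5 := by rw [Finset.card_univ]; rfl
    have hsumK : ∑ j ∈ K, v j = 0 :=
      Finset.sum_eq_zero (fun j hj => by rw [hK] at hj; exact (Finset.mem_filter.mp hj).2)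
    have hsdiff : ∑ j ∈ Finset.univ \ K, v j = -c - 2*t := by
      have h := Finset.sum_sdiff (f := v) (Finset.subset_univ K)
      rw [hsumK, add_zero] at h
      rw [h, hsum]
    have hcards : (Finset.univ \ K).card = 5 - K.card := by
      rw [Finset.card_sdiff_of_subset (Finset.subset_univ K), Finset.card_univ]; rfl
    have hlow : ((5 - K.card : ℕ) : ℝ) * (-c) ≤ -c - 2*t := by
      rw [← hsdiff, ← hcards]
      have := Finset.card_nsmul_le_sum (Finset.univ \ K) v (-c)
        (fun j _ => neg_le_of_abs_le (habs j))
      rwa [nsmul_eq_mul] at this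
    have hcast : ((5 - K.card : ℕ) : ℝ) = 5 - (K.card : ℝ) := by
      rw [Nat.cast_sub hK5]; norm_num
    rw [hcast] at hlow
    obtain ⟨N, hNdef⟩ : ∃ n, (A5.filter (fun b => (∑ j, if b j then v j else 0) = 0)).card = n := ⟨_, rfl⟩
    obtain ⟨P, hPdef⟩ : ∃ n, (Finset.univ.filter (fun j => |v j| = c)).card = n := ⟨_, rfl⟩
    obtain ⟨k, hkdef⟩ : ∃ n, K.card = n := ⟨_, rfl⟩
    rw [hNdef, hkdef] at hNval
    rw [hPdef, hkdef] at hPK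
    rw [hkdef] at hK5 hlow hcards
    rw [hNdef, hPdef]
    -- now case on K.card
    by_cases hk5 : k = 5
    · exfalso; rw [hk5] at hlow; push_cast at hlow; nlinarith
    by_cases hk4 : k = 4
    · -- z = 10
      right
      have ht0 : t = 0 := by
        rw [hk4] at hlow; push_cast at hlow; linarith
      have hP1 : P = 1 := by
        have hle1 : P ≤ 1 := by rw [hk4] at hPK; linarith
        have hcard1 : (Finset.univ \ K).card = 1 := by rw [hcards, hk4]
        obtain ⟨i, hi⟩ := Finset.card_eq_one.mp hcard1
        have hvi : v i = -c := by
          have : ∑ j ∈ Finset.univ \ K, v j = v i := by rw [hi, Finset.sum_singleton]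
          rw [this, ht0] at hsdiff; linarith
        have himem : i ∈ Finset.univ.filter (fun j => |v j| = c) := by
          rw [Finset.mem_filter]
          exact ⟨Finset.mem_univ i, by rw [hvi, abs_neg, abs_of_pos hc]⟩
        have hge1 : 1 ≤ P := by
          rw [← hPdef]
          exact Finset.card_pos.mpr ⟨i, himem⟩
        exact le_antisymm hle1 hge1
      rw [hNval, hP1, hk4, if_pos ht0]
      norm_num
    · -- K.card ≤ 3
      left
      have hk3 : k ≤ 3 := by
        by_contra hgt
        push_neg at hgt
        interval_cases k
        · exact hk4 rfl
        · exact hk5 rfl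
      by_cases ht0 : t = 0
      · -- P = 0
        have hP0 : P = 0 := by
          rw [← hPdef, Finset.card_eq_zero, Finset.filter_eq_empty_iff]
          intro j _
          intro hcj
          have hvj : v j = -c := hPneg j hcj
          have hs : v j + ∑ l ∈ Finset.univ.erase j, v l = -c - 2*t :=
            by rw [Finset.add_sum_erase _ _ (Finset.mem_univ j)]; exact hsum
          rw [hvj, ht0] at hs
          have hz : ∀ l ∈ Finset.univ.erase j, v l = 0 := by
            rw [← Finset.sum_eq_zero_iff_of_nonpos (fun l _ => hpos l)]
            linarith
          have hsub : Finset.univ.erase j ⊆ K := fun l hl => by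
            rw [hK, Finset.mem_filter]; exact ⟨Finset.mem_univ l, hz l hl⟩
          have hcc := Finset.card_le_card hsub
          rw [Finset.card_erase_of_mem (Finset.mem_univ j), Finset.card_univ] at hcc
          simp at hcc
          rw [hkdef] at hcc
          linarith
        rw [hNval, hP0, if_pos ht0]
        have : (if k = 0 then 1 else 2 ^ (k - 1)) ≤ 4 := by
          interval_cases k <;> norm_num
        linarith
      · rw [hNval, if_neg ht0]
        have hP5 : P ≤ 5 - k := Nat.le_sub_of_add_le hPK
        have : (if k = 0 then 1 else 2 ^ (k - 1)) + (5 - k) ≤ 6 := by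
          interval_cases k <;> norm_num
        linarith



noncomputable def zB (x : Fin 7 → ℝ) : ℕ := (A5.filter (fun a => bval a x = 0)).card
noncomputable def zP (x : Fin 7 → ℝ) : ℕ :=
  ((Finset.univ : Finset (Fin 5)).filter (fun j => x 5 + x (e57 j) = 0)).card
noncomputable def zM (x : Fin 7 → ℝ) : ℕ :=
  ((Finset.univ : Finset (Fin 5)).filter (fun j => x 5 - x (e57 j) = 0)).card
noncomputable def zT (x : Fin 7 → ℝ) : ℕ := if x 6 = 0 then 1 else 0

lemma filter_split {α : Type*} (s : Finset α) (f : α → ℝ)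
    (h : ∀ a ∈ s, f a ≤ 0) :
    (s.filter (fun a => f a < 0)).card + (s.filter (fun a => f a = 0)).card = s.card := by
  classical
  have heq : s.filter (fun a => f a = 0) = s.filter (fun a => ¬ f a < 0) := by
    apply Finset.filter_congr
    intro a ha
    constructor
    · intro h0; rw [h0]; exact lt_irrefl 0
    · intro hnlt; exact le_antisymm (h a ha) (not_lt.mp hnlt)
  rw [heq, Finset.card_filter_add_card_filter_not]

lemma negCount_add (x : Fin 7 → ℝ)
    (hb : ∀ a ∈ A5, bval a x ≤ 0)
    (hp : ∀ j : Fin 5, x 5 + x (e57 j) ≤ 0)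
    (hm : ∀ j : Fin 5, x 5 - x (e57 j) ≤ 0)
    (h7 : -2 * x 6 ≤ 0) :
    negCount x + (zB x + zP x + zM x + zT x) = 27 := by
  classical
  have h1 := filter_split A5 (fun a => bval a x) hb
  have h2 := filter_split Finset.univ (fun j => x 5 + x (e57 j)) (fun j _ => hp j)
  have h3 := filter_split Finset.univ (fun j => x 5 - x (e57 j)) (fun j _ => hm j)
  rw [A5_card] at h1
  rw [Finset.card_univ] at h2 h3
  have h4 : (if -2 * x 6 < 0 then (1:ℕ) else 0) + (if x 6 = 0 then (1:ℕ) else 0) = 1 := by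
    rcases lt_or_eq_of_le h7 with hlt | heq
    · rw [if_pos hlt, if_neg (by intro h0; rw [h0] at hlt; norm_num at hlt)]
    · have hx6 : x 6 = 0 := by linarith
      rw [if_neg (by rw [hx6]; norm_num), if_pos hx6]
  unfold negCount zB zP zM zT
  have h2' : (5 : ℕ) = Fintype.card (Fin 5) := rfl
  rw [← h2'] at h2 h3
  linarith

lemma zPM (x : Fin 7 → ℝ) (hs : x 5 < 0) (v : Fin 5 → ℝ)
    (hva : ∀ j, |v j| = |x (e57 j)|) :
    zP x + zM x = (Finset.univ.filter (fun j => |v j| = -x 5)).card := by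
  classical
  have hsplit : Finset.univ.filter (fun j => |v j| = -x 5) =
      (Finset.univ.filter (fun j => x 5 + x (e57 j) = 0)) ∪
      (Finset.univ.filter (fun j => x 5 - x (e57 j) = 0)) := by
    ext j
    simp only [Finset.mem_filter, Finset.mem_union, Finset.mem_univ, true_and]
    rw [hva j, abs_eq (by linarith : (0:ℝ) ≤ -x 5)]
    constructor
    · rintro (h | h)
      · left; linarith
      · right; linarith
    · rintro (h | h)
      · left; linarith
      · right; linarith
  have hdisj : Disjoint (Finset.univ.filter (fun j => x 5 + x (e57 j) = 0))
      (Finset.univ.filter (fun j => x 5 - x (e57 j) = 0)) := by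
    rw [Finset.disjoint_left]
    intro j hjp hjm
    rw [Finset.mem_filter] at hjp hjm
    have := hjp.2
    have := hjm.2
    linarith
  rw [zP, zM, hsplit, Finset.card_union_of_disjoint hdisj]

lemma z_main (x : Fin 7 → ℝ) (hx : x ≠ 0)
    (hb : ∀ a ∈ A5, bval a x ≤ 0)
    (hp : ∀ j : Fin 5, x 5 + x (e57 j) ≤ 0)
    (hm : ∀ j : Fin 5, x 5 - x (e57 j) ≤ 0)
    (h7 : -2 * x 6 ≤ 0) :
    zB x + zP x + zM x + zT x ≤ 6 ∨ zB x + zP x + zM x + zT x = 10 := by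
  classical
  have hs0 : x 5 ≤ 0 := by have := hp 0; have := hm 0; linarith
  have ht0 : 0 ≤ x 6 := by linarith
  rcases eq_or_lt_of_le hs0 with hs | hs
  · -- x 5 = 0 : z = 10
    right
    have hs' : x 5 = 0 := hs
    have hu : ∀ j, x (e57 j) = 0 := fun j =>
      le_antisymm (by have := hp j; linarith) (by have := hm j; linarith)
    have ht : x 6 ≠ 0 := by
      intro h6
      apply hx
      funext i
      fin_cases i
      · exact hu 0
      · exact hu 1
      · exact hu 2
      · exact hu 3
      · exact hu 4
      · exact hs'
      · exact h6
    have hzB : zB x = 0 := by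
      rw [zB, Finset.card_eq_zero, Finset.filter_eq_empty_iff]
      intro a _
      rw [bval]
      have hsum0 : (∑ j : Fin 5, (if a j then (-1 : ℝ) else 1) * x (e57 j)) = 0 :=
        Finset.sum_eq_zero (fun j _ => by rw [hu j, mul_zero])
      rw [hsum0, hs']
      intro hcon
      apply ht
      linarith
    have hzP : zP x = 5 := by
      rw [zP, Finset.filter_true_of_mem (fun j _ => by rw [hs', hu j]; norm_num),
        Finset.card_univ]
      rfl
    have hzM : zM x = 5 := by
      rw [zM, Finset.filter_true_of_mem (fun j _ => by rw [hs', hu j]; norm_num),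
        Finset.card_univ]
      rfl
    have hzT : zT x = 0 := by rw [zT, if_neg ht]
    rw [hzB, hzP, hzM, hzT]
  · -- x 5 < 0
    rcases Finset.eq_empty_or_nonempty (A5.filter (fun a => bval a x = 0)) with hE | hE
    · left
      have hzB : zB x = 0 := by rw [zB, hE, Finset.card_empty]
      have hdisj : Disjoint (Finset.univ.filter (fun j => x 5 + x (e57 j) = 0))
          (Finset.univ.filter (fun j => x 5 - x (e57 j) = 0)) := by
        rw [Finset.disjoint_left]
        intro j hjp hjm
        rw [Finset.mem_filter] at hjp hjm
        have h1 := hjp.2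
        have h2 := hjm.2
        linarith
      have h5 : zP x + zM x ≤ 5 := by
        rw [zP, zM, ← Finset.card_union_of_disjoint hdisj]
        calc ((Finset.univ.filter (fun j => x 5 + x (e57 j) = 0)) ∪
              (Finset.univ.filter (fun j => x 5 - x (e57 j) = 0))).card
            ≤ (Finset.univ : Finset (Fin 5)).card := Finset.card_le_card (Finset.subset_univ _)
          _ = 5 := by rw [Finset.card_univ]; rfl
      have hzT : zT x ≤ 1 := by rw [zT]; split <;> omega
      rw [hzB]
      linarith
    · obtain ⟨a, haf⟩ := hE
      rw [Finset.mem_filter] at haf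
      obtain ⟨haA, ha0⟩ := haf
      obtain ⟨v, hv⟩ : ∃ v : Fin 5 → ℝ, v = fun j => (if a j then (-1:ℝ) else 1) * x (e57 j) :=
        ⟨_, rfl⟩
      have hvj : ∀ j, v j = (if a j then (-1:ℝ) else 1) * x (e57 j) := fun j => by rw [hv]
      have hsumv : ∑ j, v j = x 5 - 2 * x 6 := by
        rw [bval] at ha0
        rw [Finset.sum_congr rfl (fun j _ => hvj j)]
        linarith
      have hvabs : ∀ j, |v j| = |x (e57 j)| := by
        intro j
        rw [hvj j]
        cases haj : a j <;> simp [haj]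
      have habs : ∀ j, |v j| ≤ -x 5 := by
        intro j
        rw [hvabs j, abs_le]
        constructor
        · have := hm j; linarith
        · have := hp j; linarith
      have hphiphi : ∀ b : Fin 5 → Bool,
          (fun l => xor ((fun l' => xor (b l') (a l')) l) (a l)) = b := by
        intro b
        funext l
        simp [Bool.xor_assoc]
      have hkey : ∀ b : Fin 5 → Bool,
          bval (fun l => xor (b l) (a l)) x = ∑ j, if b j then v j else 0 := by
        intro b
        have hpt : ∀ l ∈ (Finset.univ : Finset (Fin 5)),
            (if (xor (b l) (a l) : Bool) then (-1:ℝ) else 1) * x (e57 l)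
              = v l - 2 * (if b l then v l else 0) := by
          intro l _
          rw [hvj l]
          cases hbl : b l <;> cases hal : a l <;> simp [hbl, hal] <;> ring
        rw [bval, Finset.sum_congr rfl hpt, Finset.sum_sub_distrib, ← Finset.mul_sum, hsumv]
        ring
      have hc : (0:ℝ) < -x 5 := by linarith
      have hzB : zB x = (A5.filter (fun b => (∑ j, if b j then v j else 0) = 0)).card := by
        rw [zB]
        apply Finset.card_bij' (fun b _ => fun l => xor (b l) (a l))
          (fun b _ => fun l => xor (b l) (a l))
        · intro b hbmem
          rw [Finset.mem_filter] at hbmem ⊢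
          refine ⟨xor_mem a b haA hbmem.1, ?_⟩
          have h := hkey (fun l => xor (b l) (a l))
          rw [hphiphi b] at h
          rw [← h, hbmem.2]
        · intro b hbmem
          rw [Finset.mem_filter] at hbmem ⊢
          refine ⟨xor_mem a b haA hbmem.1, ?_⟩
          rw [hkey b, hbmem.2]
        · intro b _
          exact hphiphi b
        · intro b _
          exact hphiphi b
      have hzPMv := zPM x hs v hvabs
      have hle : ∀ b ∈ A5, (∑ j, if b j then v j else 0) ≤ 0 := by
        intro b hbA
        rw [← hkey b]
        exact hb _ (xor_mem a b haA hbA)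
      have hhelp := helper v (-x 5) (x 6) hc ht0 habs (by rw [hsumv]; ring) hle
      have hz2 : zB x + zP x + zM x + zT x =
          (A5.filter (fun b => (∑ j, if b j then v j else 0) = 0)).card +
          (Finset.univ.filter (fun j => |v j| = -x 5)).card +
          (if x 6 = 0 then 1 else 0) := by
        rw [hzB, ← hzPMv, zT]
        ring
      rw [hz2]
      exact hhelp


def wx (a b c d e f g : ℝ) : Fin 7 → ℝ := fun i =>
  if i.val = 0 then a else if i.val = 1 then b else if i.val = 2 then c
  else if i.val = 3 then d else if i.val = 4 then e else if i.val = 5 then f else g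

@[simp] lemma fv70 : ((0 : Fin 7) : ℕ) = 0 := rfl
@[simp] lemma fv71 : ((1 : Fin 7) : ℕ) = 1 := rfl
@[simp] lemma fv72 : ((2 : Fin 7) : ℕ) = 2 := rfl
@[simp] lemma fv73 : ((3 : Fin 7) : ℕ) = 3 := rfl
@[simp] lemma fv74 : ((4 : Fin 7) : ℕ) = 4 := rfl
@[simp] lemma fv75 : ((5 : Fin 7) : ℕ) = 5 := rfl
@[simp] lemma fv76 : ((6 : Fin 7) : ℕ) = 6 := rfl
@[simp] lemma fv50 : ((0 : Fin 5) : ℕ) = 0 := rfl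
@[simp] lemma fv51 : ((1 : Fin 5) : ℕ) = 1 := rfl
@[simp] lemma fv52 : ((2 : Fin 5) : ℕ) = 2 := rfl
@[simp] lemma fv53 : ((3 : Fin 5) : ℕ) = 3 := rfl
@[simp] lemma fv54 : ((4 : Fin 5) : ℕ) = 4 := rfl
@[simp] lemma e57v (j : Fin 5) : ((e57 j : Fin 7) : ℕ) = (j : ℕ) := rfl

lemma bval_le (a : Fin 5 → Bool) (y : Fin 7 → ℝ) :
    bval a y ≤ (y 5 - 2*y 6 +
      (|y (e57 0)| + |y (e57 1)| + |y (e57 2)| + |y (e57 3)| + |y (e57 4)|))/2 := by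
  rw [bval, Fin.sum_univ_five]
  have h : ∀ j : Fin 5, -(|y (e57 j)|) ≤ (if a j then (-1:ℝ) else 1) * y (e57 j) := by
    intro j
    cases haj : a j <;> simp [haj]
    · exact neg_abs_le _
    · exact le_abs_self _
  linarith [h 0, h 1, h 2, h 3, h 4]

lemma strictB (y : Fin 7 → ℝ)
    (h : y 5 - 2*y 6 + (|y (e57 0)| + |y (e57 1)| + |y (e57 2)| + |y (e57 3)| + |y (e57 4)|) < 0) :
    ∀ a : Fin 5 → Bool, bval a y < 0 :=
  fun a => lt_of_le_of_lt (bval_le a y) (by linarith)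

lemma eqbad (a : Fin 5 → Bool) : a = ![true,true,true,true,false] ↔
    (a 0 = true ∧ a 1 = true ∧ a 2 = true ∧ a 3 = true ∧ a 4 = false) := by
  constructor
  · rintro rfl; exact ⟨rfl, rfl, rfl, rfl, rfl⟩
  · rintro ⟨h0,h1,h2,h3,h4⟩
    funext i
    fin_cases i
    · exact h0
    · exact h1
    · exact h2
    · exact h3
    · exact h4

lemma hiff21 : ∀ a : Fin 5 → Bool,
    (bval a (wx 1 1 1 1 (-1) (-1) 2) = 0 ↔ a = ![true,true,true,true,false]) := by
  intro a
  rw [bval, Fin.sum_univ_five, eqbad a]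
  cases h0 : a 0 <;> cases h1 : a 1 <;> cases h2 : a 2 <;> cases h3 : a 3 <;> cases h4 : a 4 <;>
    norm_num [wx, h0, h1, h2, h3, h4]

lemma card21 : (A5.filter (fun a => bval a (wx 1 1 1 1 (-1) (-1) 2) = 0)).card = 1 := by
  classical
  have heq : A5.filter (fun a => bval a (wx 1 1 1 1 (-1) (-1) 2) = 0) =
      A5.filter (fun a => a = ![true,true,true,true,false]) :=
    Finset.filter_congr (fun a _ => hiff21 a)
  rw [heq]
  decide

def Good (k : ℕ) : Prop := ∃ y : Fin 7 → ℝ, y ≠ 0 ∧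
  y 1 ≤ y 0 ∧ y 2 ≤ y 1 ∧ y 3 ≤ y 2 ∧ |y 4| ≤ y 3 ∧
  (∀ a ∈ A5, bval a y ≤ 0) ∧
  (∀ j : Fin 5, y 5 + y (e57 j) ≤ 0) ∧
  (∀ j : Fin 5, y 5 - y (e57 j) ≤ 0) ∧
  -2 * y 6 ≤ 0 ∧
  negCount y = k

lemma good27 : Good 27 := by
  classical
  have hstrict := strictB (wx 5 4 3 2 1 (-10) 100) (by norm_num [wx])
  have hb : ∀ a ∈ A5, bval a (wx 5 4 3 2 1 (-10) 100) ≤ 0 := fun a _ => (hstrict a).le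
  have hp : ∀ j : Fin 5, (wx 5 4 3 2 1 (-10) 100) 5 + (wx 5 4 3 2 1 (-10) 100) (e57 j) ≤ 0 := by
    intro j; fin_cases j <;> norm_num [wx]
  have hm : ∀ j : Fin 5, (wx 5 4 3 2 1 (-10) 100) 5 - (wx 5 4 3 2 1 (-10) 100) (e57 j) ≤ 0 := by
    intro j; fin_cases j <;> norm_num [wx]
  have h7 : -2 * (wx 5 4 3 2 1 (-10) 100) 6 ≤ 0 := by norm_num [wx]
  have hzB : zB (wx 5 4 3 2 1 (-10) 100) = 0 := by
    rw [zB, Finset.card_eq_zero, Finset.filter_eq_empty_iff]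
    intro a _
    exact (hstrict a).ne
  have hzP : zP (wx 5 4 3 2 1 (-10) 100) = 0 := by
    rw [zP, show (Finset.univ.filter (fun j : Fin 5 => (wx 5 4 3 2 1 (-10) 100) 5 + (wx 5 4 3 2 1 (-10) 100) (e57 j) = 0))
        = (∅ : Finset (Fin 5)) from by
      ext j
      fin_cases j <;> norm_num [wx]
      all_goals decide]
    decide
  have hzM : zM (wx 5 4 3 2 1 (-10) 100) = 0 := by
    rw [zM, show (Finset.univ.filter (fun j : Fin 5 => (wx 5 4 3 2 1 (-10) 100) 5 - (wx 5 4 3 2 1 (-10) 100) (e57 j) = 0))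
        = (∅ : Finset (Fin 5)) from by
      ext j
      fin_cases j <;> norm_num [wx]
      all_goals decide]
    decide
  have hzT : zT (wx 5 4 3 2 1 (-10) 100) = 0 := by rw [zT, if_neg]; norm_num [wx]
  have key := negCount_add (wx 5 4 3 2 1 (-10) 100) hb hp hm h7
  rw [hzB, hzP, hzM, hzT] at key
  refine ⟨wx 5 4 3 2 1 (-10) 100, ?_, ?_, ?_, ?_, ?_, hb, hp, hm, h7, ?_⟩
  · intro h; have := congrFun h 6; norm_num [wx] at this
  · norm_num [wx]
  · norm_num [wx]
  · norm_num [wx]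
  · norm_num [wx]
  · omega

lemma good26 : Good 26 := by
  classical
  have hstrict := strictB (wx 10 4 3 2 1 (-10) 100) (by norm_num [wx])
  have hb : ∀ a ∈ A5, bval a (wx 10 4 3 2 1 (-10) 100) ≤ 0 := fun a _ => (hstrict a).le
  have hp : ∀ j : Fin 5, (wx 10 4 3 2 1 (-10) 100) 5 + (wx 10 4 3 2 1 (-10) 100) (e57 j) ≤ 0 := by
    intro j; fin_cases j <;> norm_num [wx]
  have hm : ∀ j : Fin 5, (wx 10 4 3 2 1 (-10) 100) 5 - (wx 10 4 3 2 1 (-10) 100) (e57 j) ≤ 0 := by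
    intro j; fin_cases j <;> norm_num [wx]
  have h7 : -2 * (wx 10 4 3 2 1 (-10) 100) 6 ≤ 0 := by norm_num [wx]
  have hzB : zB (wx 10 4 3 2 1 (-10) 100) = 0 := by
    rw [zB, Finset.card_eq_zero, Finset.filter_eq_empty_iff]
    intro a _
    exact (hstrict a).ne
  have hzP : zP (wx 10 4 3 2 1 (-10) 100) = 1 := by
    rw [zP, show (Finset.univ.filter (fun j : Fin 5 => (wx 10 4 3 2 1 (-10) 100) 5 + (wx 10 4 3 2 1 (-10) 100) (e57 j) = 0))
        = ({0} : Finset (Fin 5)) from by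
      ext j
      fin_cases j <;> norm_num [wx]
      all_goals decide]
    decide
  have hzM : zM (wx 10 4 3 2 1 (-10) 100) = 0 := by
    rw [zM, show (Finset.univ.filter (fun j : Fin 5 => (wx 10 4 3 2 1 (-10) 100) 5 - (wx 10 4 3 2 1 (-10) 100) (e57 j) = 0))
        = (∅ : Finset (Fin 5)) from by
      ext j
      fin_cases j <;> norm_num [wx]
      all_goals decide]
    decide
  have hzT : zT (wx 10 4 3 2 1 (-10) 100) = 0 := by rw [zT, if_neg]; norm_num [wx]
  have key := negCount_add (wx 10 4 3 2 1 (-10) 100) hb hp hm h7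
  rw [hzB, hzP, hzM, hzT] at key
  refine ⟨wx 10 4 3 2 1 (-10) 100, ?_, ?_, ?_, ?_, ?_, hb, hp, hm, h7, ?_⟩
  · intro h; have := congrFun h 6; norm_num [wx] at this
  · norm_num [wx]
  · norm_num [wx]
  · norm_num [wx]
  · norm_num [wx]
  · omega

lemma good25 : Good 25 := by
  classical
  have hstrict := strictB (wx 10 10 3 2 1 (-10) 100) (by norm_num [wx])
  have hb : ∀ a ∈ A5, bval a (wx 10 10 3 2 1 (-10) 100) ≤ 0 := fun a _ => (hstrict a).le
  have hp : ∀ j : Fin 5, (wx 10 10 3 2 1 (-10) 100) 5 + (wx 10 10 3 2 1 (-10) 100) (e57 j) ≤ 0 := by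
    intro j; fin_cases j <;> norm_num [wx]
  have hm : ∀ j : Fin 5, (wx 10 10 3 2 1 (-10) 100) 5 - (wx 10 10 3 2 1 (-10) 100) (e57 j) ≤ 0 := by
    intro j; fin_cases j <;> norm_num [wx]
  have h7 : -2 * (wx 10 10 3 2 1 (-10) 100) 6 ≤ 0 := by norm_num [wx]
  have hzB : zB (wx 10 10 3 2 1 (-10) 100) = 0 := by
    rw [zB, Finset.card_eq_zero, Finset.filter_eq_empty_iff]
    intro a _
    exact (hstrict a).ne
  have hzP : zP (wx 10 10 3 2 1 (-10) 100) = 2 := by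
    rw [zP, show (Finset.univ.filter (fun j : Fin 5 => (wx 10 10 3 2 1 (-10) 100) 5 + (wx 10 10 3 2 1 (-10) 100) (e57 j) = 0))
        = ({0,1} : Finset (Fin 5)) from by
      ext j
      fin_cases j <;> norm_num [wx]
      all_goals decide]
    decide
  have hzM : zM (wx 10 10 3 2 1 (-10) 100) = 0 := by
    rw [zM, show (Finset.univ.filter (fun j : Fin 5 => (wx 10 10 3 2 1 (-10) 100) 5 - (wx 10 10 3 2 1 (-10) 100) (e57 j) = 0))
        = (∅ : Finset (Fin 5)) from by
      ext j
      fin_cases j <;> norm_num [wx]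
      all_goals decide]
    decide
  have hzT : zT (wx 10 10 3 2 1 (-10) 100) = 0 := by rw [zT, if_neg]; norm_num [wx]
  have key := negCount_add (wx 10 10 3 2 1 (-10) 100) hb hp hm h7
  rw [hzB, hzP, hzM, hzT] at key
  refine ⟨wx 10 10 3 2 1 (-10) 100, ?_, ?_, ?_, ?_, ?_, hb, hp, hm, h7, ?_⟩
  · intro h; have := congrFun h 6; norm_num [wx] at this
  · norm_num [wx]
  · norm_num [wx]
  · norm_num [wx]
  · norm_num [wx]
  · omega

lemma good24 : Good 24 := by
  classical
  have hstrict := strictB (wx 10 10 10 2 1 (-10) 100) (by norm_num [wx])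
  have hb : ∀ a ∈ A5, bval a (wx 10 10 10 2 1 (-10) 100) ≤ 0 := fun a _ => (hstrict a).le
  have hp : ∀ j : Fin 5, (wx 10 10 10 2 1 (-10) 100) 5 + (wx 10 10 10 2 1 (-10) 100) (e57 j) ≤ 0 := by
    intro j; fin_cases j <;> norm_num [wx]
  have hm : ∀ j : Fin 5, (wx 10 10 10 2 1 (-10) 100) 5 - (wx 10 10 10 2 1 (-10) 100) (e57 j) ≤ 0 := by
    intro j; fin_cases j <;> norm_num [wx]
  have h7 : -2 * (wx 10 10 10 2 1 (-10) 100) 6 ≤ 0 := by norm_num [wx]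
  have hzB : zB (wx 10 10 10 2 1 (-10) 100) = 0 := by
    rw [zB, Finset.card_eq_zero, Finset.filter_eq_empty_iff]
    intro a _
    exact (hstrict a).ne
  have hzP : zP (wx 10 10 10 2 1 (-10) 100) = 3 := by
    rw [zP, show (Finset.univ.filter (fun j : Fin 5 => (wx 10 10 10 2 1 (-10) 100) 5 + (wx 10 10 10 2 1 (-10) 100) (e57 j) = 0))
        = ({0,1,2} : Finset (Fin 5)) from by
      ext j
      fin_cases j <;> norm_num [wx]
      all_goals decide]
    decide
  have hzM : zM (wx 10 10 10 2 1 (-10) 100) = 0 := by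
    rw [zM, show (Finset.univ.filter (fun j : Fin 5 => (wx 10 10 10 2 1 (-10) 100) 5 - (wx 10 10 10 2 1 (-10) 100) (e57 j) = 0))
        = (∅ : Finset (Fin 5)) from by
      ext j
      fin_cases j <;> norm_num [wx]
      all_goals decide]
    decide
  have hzT : zT (wx 10 10 10 2 1 (-10) 100) = 0 := by rw [zT, if_neg]; norm_num [wx]
  have key := negCount_add (wx 10 10 10 2 1 (-10) 100) hb hp hm h7
  rw [hzB, hzP, hzM, hzT] at key
  refine ⟨wx 10 10 10 2 1 (-10) 100, ?_, ?_, ?_, ?_, ?_, hb, hp, hm, h7, ?_⟩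
  · intro h; have := congrFun h 6; norm_num [wx] at this
  · norm_num [wx]
  · norm_num [wx]
  · norm_num [wx]
  · norm_num [wx]
  · omega

lemma good23 : Good 23 := by
  classical
  have hstrict := strictB (wx 10 10 10 10 1 (-10) 100) (by norm_num [wx])
  have hb : ∀ a ∈ A5, bval a (wx 10 10 10 10 1 (-10) 100) ≤ 0 := fun a _ => (hstrict a).le
  have hp : ∀ j : Fin 5, (wx 10 10 10 10 1 (-10) 100) 5 + (wx 10 10 10 10 1 (-10) 100) (e57 j) ≤ 0 := by
    intro j; fin_cases j <;> norm_num [wx]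
  have hm : ∀ j : Fin 5, (wx 10 10 10 10 1 (-10) 100) 5 - (wx 10 10 10 10 1 (-10) 100) (e57 j) ≤ 0 := by
    intro j; fin_cases j <;> norm_num [wx]
  have h7 : -2 * (wx 10 10 10 10 1 (-10) 100) 6 ≤ 0 := by norm_num [wx]
  have hzB : zB (wx 10 10 10 10 1 (-10) 100) = 0 := by
    rw [zB, Finset.card_eq_zero, Finset.filter_eq_empty_iff]
    intro a _
    exact (hstrict a).ne
  have hzP : zP (wx 10 10 10 10 1 (-10) 100) = 4 := by
    rw [zP, show (Finset.univ.filter (fun j : Fin 5 => (wx 10 10 10 10 1 (-10) 100) 5 + (wx 10 10 10 10 1 (-10) 100) (e57 j) = 0))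
        = ({0,1,2,3} : Finset (Fin 5)) from by
      ext j
      fin_cases j <;> norm_num [wx]
      all_goals decide]
    decide
  have hzM : zM (wx 10 10 10 10 1 (-10) 100) = 0 := by
    rw [zM, show (Finset.univ.filter (fun j : Fin 5 => (wx 10 10 10 10 1 (-10) 100) 5 - (wx 10 10 10 10 1 (-10) 100) (e57 j) = 0))
        = (∅ : Finset (Fin 5)) from by
      ext j
      fin_cases j <;> norm_num [wx]
      all_goals decide]
    decide
  have hzT : zT (wx 10 10 10 10 1 (-10) 100) = 0 := by rw [zT, if_neg]; norm_num [wx]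
  have key := negCount_add (wx 10 10 10 10 1 (-10) 100) hb hp hm h7
  rw [hzB, hzP, hzM, hzT] at key
  refine ⟨wx 10 10 10 10 1 (-10) 100, ?_, ?_, ?_, ?_, ?_, hb, hp, hm, h7, ?_⟩
  · intro h; have := congrFun h 6; norm_num [wx] at this
  · norm_num [wx]
  · norm_num [wx]
  · norm_num [wx]
  · norm_num [wx]
  · omega

lemma good22 : Good 22 := by
  classical
  have hstrict := strictB (wx 10 10 10 10 10 (-10) 100) (by norm_num [wx])
  have hb : ∀ a ∈ A5, bval a (wx 10 10 10 10 10 (-10) 100) ≤ 0 := fun a _ => (hstrict a).le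
  have hp : ∀ j : Fin 5, (wx 10 10 10 10 10 (-10) 100) 5 + (wx 10 10 10 10 10 (-10) 100) (e57 j) ≤ 0 := by
    intro j; fin_cases j <;> norm_num [wx]
  have hm : ∀ j : Fin 5, (wx 10 10 10 10 10 (-10) 100) 5 - (wx 10 10 10 10 10 (-10) 100) (e57 j) ≤ 0 := by
    intro j; fin_cases j <;> norm_num [wx]
  have h7 : -2 * (wx 10 10 10 10 10 (-10) 100) 6 ≤ 0 := by norm_num [wx]
  have hzB : zB (wx 10 10 10 10 10 (-10) 100) = 0 := by
    rw [zB, Finset.card_eq_zero, Finset.filter_eq_empty_iff]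
    intro a _
    exact (hstrict a).ne
  have hzP : zP (wx 10 10 10 10 10 (-10) 100) = 5 := by
    rw [zP, show (Finset.univ.filter (fun j : Fin 5 => (wx 10 10 10 10 10 (-10) 100) 5 + (wx 10 10 10 10 10 (-10) 100) (e57 j) = 0))
        = ({0,1,2,3,4} : Finset (Fin 5)) from by
      ext j
      fin_cases j <;> norm_num [wx]
      all_goals decide]
    decide
  have hzM : zM (wx 10 10 10 10 10 (-10) 100) = 0 := by
    rw [zM, show (Finset.univ.filter (fun j : Fin 5 => (wx 10 10 10 10 10 (-10) 100) 5 - (wx 10 10 10 10 10 (-10) 100) (e57 j) = 0))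
        = (∅ : Finset (Fin 5)) from by
      ext j
      fin_cases j <;> norm_num [wx]
      all_goals decide]
    decide
  have hzT : zT (wx 10 10 10 10 10 (-10) 100) = 0 := by rw [zT, if_neg]; norm_num [wx]
  have key := negCount_add (wx 10 10 10 10 10 (-10) 100) hb hp hm h7
  rw [hzB, hzP, hzM, hzT] at key
  refine ⟨wx 10 10 10 10 10 (-10) 100, ?_, ?_, ?_, ?_, ?_, hb, hp, hm, h7, ?_⟩
  · intro h; have := congrFun h 6; norm_num [wx] at this
  · norm_num [wx]
  · norm_num [wx]
  · norm_num [wx]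
  · norm_num [wx]
  · omega

lemma good17 : Good 17 := by
  classical
  have hstrict := strictB (wx 0 0 0 0 0 0 1) (by norm_num [wx])
  have hb : ∀ a ∈ A5, bval a (wx 0 0 0 0 0 0 1) ≤ 0 := fun a _ => (hstrict a).le
  have hp : ∀ j : Fin 5, (wx 0 0 0 0 0 0 1) 5 + (wx 0 0 0 0 0 0 1) (e57 j) ≤ 0 := by
    intro j; fin_cases j <;> norm_num [wx]
  have hm : ∀ j : Fin 5, (wx 0 0 0 0 0 0 1) 5 - (wx 0 0 0 0 0 0 1) (e57 j) ≤ 0 := by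
    intro j; fin_cases j <;> norm_num [wx]
  have h7 : -2 * (wx 0 0 0 0 0 0 1) 6 ≤ 0 := by norm_num [wx]
  have hzB : zB (wx 0 0 0 0 0 0 1) = 0 := by
    rw [zB, Finset.card_eq_zero, Finset.filter_eq_empty_iff]
    intro a _
    exact (hstrict a).ne
  have hzP : zP (wx 0 0 0 0 0 0 1) = 5 := by
    rw [zP, show (Finset.univ.filter (fun j : Fin 5 => (wx 0 0 0 0 0 0 1) 5 + (wx 0 0 0 0 0 0 1) (e57 j) = 0))
        = ({0,1,2,3,4} : Finset (Fin 5)) from by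
      ext j
      fin_cases j <;> norm_num [wx]
      all_goals decide]
    decide
  have hzM : zM (wx 0 0 0 0 0 0 1) = 5 := by
    rw [zM, show (Finset.univ.filter (fun j : Fin 5 => (wx 0 0 0 0 0 0 1) 5 - (wx 0 0 0 0 0 0 1) (e57 j) = 0))
        = ({0,1,2,3,4} : Finset (Fin 5)) from by
      ext j
      fin_cases j <;> norm_num [wx]
      all_goals decide]
    decide
  have hzT : zT (wx 0 0 0 0 0 0 1) = 0 := by rw [zT, if_neg]; norm_num [wx]
  have key := negCount_add (wx 0 0 0 0 0 0 1) hb hp hm h7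
  rw [hzB, hzP, hzM, hzT] at key
  refine ⟨wx 0 0 0 0 0 0 1, ?_, ?_, ?_, ?_, ?_, hb, hp, hm, h7, ?_⟩
  · intro h; have := congrFun h 6; norm_num [wx] at this
  · norm_num [wx]
  · norm_num [wx]
  · norm_num [wx]
  · norm_num [wx]
  · omega

lemma good21 : Good 21 := by
  classical
  have hb : ∀ a ∈ A5, bval a (wx 1 1 1 1 (-1) (-1) 2) ≤ 0 := by
    intro a _
    have h := bval_le a (wx 1 1 1 1 (-1) (-1) 2)
    norm_num [wx] at h
    linarith
  have hp : ∀ j : Fin 5, (wx 1 1 1 1 (-1) (-1) 2) 5 + (wx 1 1 1 1 (-1) (-1) 2) (e57 j) ≤ 0 := by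
    intro j; fin_cases j <;> norm_num [wx]
  have hm : ∀ j : Fin 5, (wx 1 1 1 1 (-1) (-1) 2) 5 - (wx 1 1 1 1 (-1) (-1) 2) (e57 j) ≤ 0 := by
    intro j; fin_cases j <;> norm_num [wx]
  have h7 : -2 * (wx 1 1 1 1 (-1) (-1) 2) 6 ≤ 0 := by norm_num [wx]
  have hzB : zB (wx 1 1 1 1 (-1) (-1) 2) = 1 := card21
  have hzP : zP (wx 1 1 1 1 (-1) (-1) 2) = 4 := by
    rw [zP, show (Finset.univ.filter (fun j : Fin 5 =>
        (wx 1 1 1 1 (-1) (-1) 2) 5 + (wx 1 1 1 1 (-1) (-1) 2) (e57 j) = 0))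
        = ({0,1,2,3} : Finset (Fin 5)) from by
      ext j
      fin_cases j <;> norm_num [wx]
      all_goals decide]
    decide
  have hzM : zM (wx 1 1 1 1 (-1) (-1) 2) = 1 := by
    rw [zM, show (Finset.univ.filter (fun j : Fin 5 =>
        (wx 1 1 1 1 (-1) (-1) 2) 5 - (wx 1 1 1 1 (-1) (-1) 2) (e57 j) = 0))
        = ({4} : Finset (Fin 5)) from by
      ext j
      fin_cases j <;> norm_num [wx]
      all_goals decide]
    decide
  have hzT : zT (wx 1 1 1 1 (-1) (-1) 2) = 0 := by rw [zT, if_neg]; norm_num [wx]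
  have key := negCount_add (wx 1 1 1 1 (-1) (-1) 2) hb hp hm h7
  rw [hzB, hzP, hzM, hzT] at key
  refine ⟨wx 1 1 1 1 (-1) (-1) 2, ?_, ?_, ?_, ?_, ?_, hb, hp, hm, h7, ?_⟩
  · intro h; have := congrFun h 6; norm_num [wx] at this
  · norm_num [wx]
  · norm_num [wx]
  · norm_num [wx]
  · norm_num [wx]
  · omega

/-- Type EVII, case R⁺ = 0: if x ≠ 0, x₁ ≥ x₂ ≥ x₃ ≥ x₄ ≥ |x₅| and all 27
values are ≤ 0, then the number of strictly negative values lies in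
{17,21,22,23,24,25,26,27}, and each such value is attained for some such x. -/
theorem stmt12 (x : Fin 7 → ℝ) (hx : x ≠ 0)
    (h1 : x 1 ≤ x 0) (h2 : x 2 ≤ x 1) (h3 : x 3 ≤ x 2) (h4 : |x 4| ≤ x 3)
    (hb : ∀ a ∈ A5, bval a x ≤ 0)
    (hp : ∀ j : Fin 5, x 5 + x (e57 j) ≤ 0)
    (hm : ∀ j : Fin 5, x 5 - x (e57 j) ≤ 0)
    (h7 : -2 * x 6 ≤ 0) :
    negCount x ∈ ({17, 21, 22, 23, 24, 25, 26, 27} : Finset ℕ) ∧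
    ∀ k ∈ ({17, 21, 22, 23, 24, 25, 26, 27} : Finset ℕ), ∃ y : Fin 7 → ℝ, y ≠ 0 ∧
      y 1 ≤ y 0 ∧ y 2 ≤ y 1 ∧ y 3 ≤ y 2 ∧ |y 4| ≤ y 3 ∧
      (∀ a ∈ A5, bval a y ≤ 0) ∧
      (∀ j : Fin 5, y 5 + y (e57 j) ≤ 0) ∧
      (∀ j : Fin 5, y 5 - y (e57 j) ≤ 0) ∧
      -2 * y 6 ≤ 0 ∧
      negCount y = k := by
  constructor
  · have key := negCount_add x hb hp hm h7
    have hz := z_main x hx hb hp hm h7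
    simp only [Finset.mem_insert, Finset.mem_singleton]
    rcases hz with h | h <;> omega
  · intro k hk
    simp only [Finset.mem_insert, Finset.mem_singleton] at hk
    rcases hk with rfl | rfl | rfl | rfl | rfl | rfl | rfl | rfl
    exacts [good17, good21, good22, good23, good24, good25, good26, good27]
end

section
/- Let n ≥ 2 and let r be an integer with 1 ≤ r ≤ n. Then there exists a nonzero x : Fin n → ℝ with x_1 ≤ ⋯ ≤ x_n such that x_i + x_j ≤ 0 for all 1 ≤ i ≤ j ≤ n and #{(i,j) : 1 ≤ i ≤ j ≤ n, x_i + x_j < 0} = r(2n − r + 1)/2. -/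
lemma aux16 (n : ℕ) : ∀ r, r ≤ n →
    2 * (∑ i ∈ Finset.Icc 1 r, (n + 1 - i)) = r * (2 * n + 1 - r) := by
  intro r
  induction r with
  | zero => simp
  | succ r ih =>
    intro h
    rw [Finset.sum_Icc_succ_top (by omega)]
    obtain ⟨a, rfl⟩ := Nat.exists_eq_add_of_le (show r ≤ n by omega)
    rw [mul_add, ih (by omega)]
    rw [show 2*(r+a)+1 - r = r + 2*a + 1 from by omega,
        show 2*(r+a)+1 - (r+1) = r + 2*a from by omega,
        show (r+a)+1 - (r+1) = a from by omega]
    ring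

/-- Realization for type CI, G = Sp(n,ℝ): every value r(2n−r+1)/2 with
1 ≤ r ≤ n is attained as #{(i,j) : i ≤ j, x_i + x_j < 0} for some nonzero
increasing x with x_i + x_j ≤ 0 for all i ≤ j. -/
theorem stmt16 (n r : ℕ) (hn : 2 ≤ n) (hr1 : 1 ≤ r) (hrn : r ≤ n) :
    ∃ x : ℕ → ℝ,
      (∃ j ∈ Finset.Icc 1 n, x j ≠ 0) ∧
      (∀ i j, 1 ≤ i → i ≤ j → j ≤ n → x i ≤ x j) ∧
      (∀ i j, 1 ≤ i → i ≤ j → j ≤ n → x i + x j ≤ 0) ∧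
      ((Finset.Icc 1 n ×ˢ Finset.Icc 1 n).filter
          (fun p => p.1 ≤ p.2 ∧ x p.1 + x p.2 < 0)).card = r * (2*n - r + 1) / 2 := by
  refine ⟨fun i => if i ≤ r then (-1 : ℝ) else 0, ⟨1, by simp [hn, hr1]; omega, by simp [hr1]⟩,
    ?_, ?_, ?_⟩
  · intro i j _ hij _
    by_cases h1 : i ≤ r <;> by_cases h2 : j ≤ r <;> simp [h1, h2] <;> omega
  · intro i j _ hij _
    by_cases h1 : i ≤ r <;> by_cases h2 : j ≤ r <;> simp [h1, h2]
  · have hset : ((Finset.Icc 1 n ×ˢ Finset.Icc 1 n).filter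
        (fun p => p.1 ≤ p.2 ∧ (if p.1 ≤ r then (-1:ℝ) else 0) + (if p.2 ≤ r then (-1:ℝ) else 0) < 0))
        = (Finset.Icc 1 n ×ˢ Finset.Icc 1 n).filter (fun p => p.1 ≤ r ∧ p.1 ≤ p.2) := by
      apply Finset.filter_congr
      intro p hp
      by_cases h1 : p.1 ≤ r <;> by_cases h2 : p.2 ≤ r <;>
        simp [h1, h2] <;> intros <;> omega
    rw [hset]
    have hcard : ((Finset.Icc 1 n ×ˢ Finset.Icc 1 n).filter
        (fun p => p.1 ≤ r ∧ p.1 ≤ p.2)).card = ∑ i ∈ Finset.Icc 1 r, (n + 1 - i) := by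
      rw [Finset.card_filter, Finset.sum_product]
      rw [show (∑ i ∈ Finset.Icc 1 r, (n + 1 - i))
          = ∑ i ∈ Finset.Icc 1 n, (if i ≤ r then n + 1 - i else 0) from ?_]
      · apply Finset.sum_congr rfl
        intro i hi
        simp only [Finset.mem_Icc] at hi
        by_cases h1 : i ≤ r
        · simp only [h1, true_and, if_true]
          rw [← Finset.card_filter]
          have : Finset.filter (fun j => i ≤ j) (Finset.Icc 1 n) = Finset.Icc i n := by
            ext j; simp only [Finset.mem_filter, Finset.mem_Icc]; omega
          rw [this, Nat.card_Icc]
        · simp [h1]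
      · rw [← Finset.sum_filter]
        congr 1
        ext i; simp only [Finset.mem_filter, Finset.mem_Icc]; omega
    rw [hcard]
    have h2 := aux16 n r hrn
    rw [show 2*n - r + 1 = 2*n + 1 - r from by omega]
    omega
end

section
/- Let n ≥ 4 and let x : Fin n → ℝ satisfy x_1 ≤ ⋯ ≤ x_n, and suppose that (n−1, n) is the unique pair (i,j) with 1 ≤ i < j ≤ n and x_i + x_j > 0. Then x_n > 0, x_i + x_n ≤ 0 for all 1 ≤ i ≤ n−2, and #{(i,j) : 1 ≤ i < j ≤ n, x_i + x_j < 0} belongs to the set {(s−1) + (n−1)(n−2)/2 : 1 ≤ s ≤ n−2} ∪ {2(s−1) + (n−2)(n−3)/2 : 1 ≤ s ≤ n−2} ∪ {(n−2)(n+1)/2}. -/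
/-!
From `x_{n-1} + x_n > 0` and `x_i + x_n ≤ 0` for `i ≤ n - 2` we get `x_n > 0`, hence `x_i < 0` for
`i ≤ n - 2`, so all `C(n-2, 2)` pairs inside `{1, …, n-2}` have negative sum. A pair `(i, n-1)` or
`(i, n)` with `i ≤ n - 2` has sum `≤ 0`, and is negative unless the sum vanishes; if `u` and `t`
such sums vanish in the two columns, the count is `C(n-2, 2) + (n-2-u) + (n-2-t)`. If
`x_{n-1} = x_n` the two columns agree and `u = t`; otherwise no `i` has a vanishing sum in both,
so `u + t ≤ n - 2`. Together with the case `u = t = 0` this gives the three families.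
-/

open Finset

section Pairs

variable (P : ℕ → ℕ → Prop) [DecidableRel P]

theorem card_filter_pairs_Icc_succ (n : ℕ) :
    #{p ∈ Icc 1 (n + 1) ×ˢ Icc 1 (n + 1) | p.1 < p.2 ∧ P p.1 p.2} =
      #{p ∈ Icc 1 n ×ˢ Icc 1 n | p.1 < p.2 ∧ P p.1 p.2} + #{i ∈ Icc 1 n | P i (n + 1)} := by
  have hsplit : {p ∈ Icc 1 (n + 1) ×ˢ Icc 1 (n + 1) | p.1 < p.2 ∧ P p.1 p.2} =
      {p ∈ Icc 1 n ×ˢ Icc 1 n | p.1 < p.2 ∧ P p.1 p.2} ∪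
        {i ∈ Icc 1 n | P i (n + 1)}.image (·, n + 1) := by
    ext ⟨a, b⟩
    simp only [mem_filter, mem_product, mem_Icc, mem_union, mem_image, Prod.mk.injEq]
    constructor
    · rintro ⟨⟨⟨ha, -⟩, hb, hbn⟩, hab, hP⟩
      rcases Nat.lt_or_ge b (n + 1) with hb' | hb'
      · exact .inl ⟨⟨⟨ha, by omega⟩, hb, by omega⟩, hab, hP⟩
      · obtain rfl : b = n + 1 := by omega
        exact .inr ⟨a, ⟨⟨ha, by omega⟩, hP⟩, rfl, rfl⟩
    · rintro (⟨⟨⟨ha, han⟩, hb, hbn⟩, hab, hP⟩ | ⟨i, ⟨⟨hi, hin⟩, hP⟩, rfl, rfl⟩)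
      · exact ⟨⟨⟨ha, by omega⟩, hb, by omega⟩, hab, hP⟩
      · exact ⟨⟨⟨hi, by omega⟩, by omega, le_rfl⟩, by omega, hP⟩
  rw [hsplit, card_union_of_disjoint, card_image_of_injective _ (Prod.mk_left_injective _)]
  simp only [disjoint_left, mem_filter, mem_product, mem_Icc, mem_image, not_exists, not_and]
  rintro _ ⟨⟨-, -, hb⟩, -⟩ i - rfl
  omega

theorem card_filter_pairs_Icc_of_forall (n : ℕ)
    (hP : ∀ i j, 1 ≤ i → i < j → j ≤ n → P i j) :
    #{p ∈ Icc 1 n ×ˢ Icc 1 n | p.1 < p.2 ∧ P p.1 p.2} = n.choose 2 := by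
  induction n with
  | zero => rfl
  | succ n ih =>
    have hfiber : #{i ∈ Icc 1 n | P i (n + 1)} = n := by
      rw [filter_true_of_mem fun i hi => hP i (n + 1) (mem_Icc.1 hi).1 (by grind) le_rfl,
        Nat.card_Icc, Nat.add_sub_cancel]
    rw [card_filter_pairs_Icc_succ, ih fun i j hi hij hj => hP i j hi hij (by omega), hfiber,
      Nat.choose_succ_succ', Nat.choose_one_right, add_comm]

end Pairs

theorem card_filter_Icc_succ_of_not {p : ℕ → Prop} [DecidablePred p] {n : ℕ} (h : ¬ p (n + 1)) :
    #{i ∈ Icc 1 (n + 1) | p i} = #{i ∈ Icc 1 n | p i} := by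
  rw [← insert_Icc_right_eq_Icc_add_one (by omega), filter_insert, if_neg h]

theorem card_filter_neg_eq_sub {α : Type*} (s : Finset α) (f : α → ℝ) (hf : ∀ i ∈ s, f i ≤ 0) :
    #{i ∈ s | f i < 0} = #s - #{i ∈ s | f i = 0} := by
  rw [← card_filter_add_card_filter_not (s := s) (fun i => f i = 0), Nat.add_sub_cancel_left]
  exact congrArg card <| filter_congr fun i hi => by grind

theorem card_filter_add_card_filter_le {α : Type*} {s : Finset α} {p q : α → Prop}
    [DecidablePred p] [DecidablePred q] (h : ∀ a ∈ s, p a → ¬ q a) :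
    #{a ∈ s | p a} + #{a ∈ s | q a} ≤ #s := by
  classical
  rw [← card_union_of_disjoint (disjoint_filter.2 h)]
  exact card_le_card (union_subset (filter_subset _ _) (filter_subset _ _))

theorem card_filter_pairs_add_neg_eq {k : ℕ} {x : ℕ → ℝ}
    (hmono : ∀ i j, 1 ≤ i → i ≤ j → j ≤ k + 2 → x i ≤ x j)
    (htop : 0 < x (k + 1) + x (k + 2))
    (hrest : ∀ i j, 1 ≤ i → i ≤ k → i < j → j ≤ k + 2 → x i + x j ≤ 0) :
    #{p ∈ Icc 1 (k + 2) ×ˢ Icc 1 (k + 2) | p.1 < p.2 ∧ x p.1 + x p.2 < 0} =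
      k.choose 2 + (k - #{i ∈ Icc 1 k | x i + x (k + 1) = 0})
        + (k - #{i ∈ Icc 1 k | x i + x (k + 2) = 0}) := by
  have hneg : ∀ i j, 1 ≤ i → i < j → j ≤ k → x i + x j < 0 := fun i j hi hij hj => by
    have := hrest j (k + 2) (by omega) hj (by omega) le_rfl
    linarith [hmono i j hi hij.le (by omega), hmono (k + 1) (k + 2) (by omega) (by omega) le_rfl]
  have hmem (j : ℕ) (hj : j ≤ k + 2) (hkj : k < j) : ∀ i ∈ Icc 1 k, x i + x j ≤ 0 :=
    fun i hi => hrest i j (mem_Icc.1 hi).1 (mem_Icc.1 hi).2 (by grind) hj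
  rw [card_filter_pairs_Icc_succ (fun i j => x i + x j < 0),
    card_filter_pairs_Icc_succ (fun i j => x i + x j < 0),
    card_filter_pairs_Icc_of_forall (fun i j => x i + x j < 0) k hneg,
    card_filter_Icc_succ_of_not htop.not_gt,
    card_filter_neg_eq_sub _ _ (hmem (k + 1) (by omega) (by omega)),
    card_filter_neg_eq_sub _ _ (hmem (k + 2) le_rfl (by omega)), Nat.card_Icc, Nat.add_sub_cancel]

theorem choose_two_add_sub_add_sub_mem {k u t : ℕ} (hu : u ≤ k) (ht : t ≤ k)
    (hut : u = t ∨ u + t ≤ k) :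
    (∃ s, 1 ≤ s ∧ s ≤ k ∧ k.choose 2 + (k - u) + (k - t) = (s - 1) + (k + 1) * k / 2) ∨
    (∃ s, 1 ≤ s ∧ s ≤ k ∧ k.choose 2 + (k - u) + (k - t) = 2 * (s - 1) + k * (k - 1) / 2) ∨
    k.choose 2 + (k - u) + (k - t) = k * (k + 3) / 2 := by
  have h₁ : (k + 1) * k / 2 = k.choose 2 + k := by
    have := Nat.choose_two_right (k + 1)
    rw [Nat.add_sub_cancel] at this
    rw [← this, Nat.choose_succ_succ', Nat.choose_one_right, add_comm]
  have h₂ : k * (k + 3) / 2 = k.choose 2 + 2 * k := by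
    rw [Nat.choose_two_right, ← Nat.add_mul_div_left _ _ two_pos]
    congr 1
    obtain _ | k := k
    · rfl
    · rw [Nat.add_sub_cancel]; ring
  rw [← Nat.choose_two_right, h₁, h₂]
  by_cases h0 : u = 0 ∧ t = 0
  · right; right; omega
  rcases hut with rfl | hle
  · right; left; exact ⟨k + 1 - u, by omega, by omega, by omega⟩
  · left; exact ⟨k + 1 - (u + t), by omega, by omega, by omega⟩

/-- Type DIII, G = SO*(2n), case R⁺ = 1: if (n−1, n) is the unique pair (i,j),
i < j, with x_i + x_j > 0, then x_n > 0, x_i + x_n ≤ 0 for i ≤ n−2, and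
#{(i,j) : i < j, x_i + x_j < 0} lies in
{(s−1) + (n−1)(n−2)/2 : 1 ≤ s ≤ n−2} ∪ {2(s−1) + (n−2)(n−3)/2 : 1 ≤ s ≤ n−2}
∪ {(n−2)(n+1)/2}. -/
theorem stmt17 (n : ℕ) (hn : 4 ≤ n) (x : ℕ → ℝ)
    (hmono : ∀ i j, 1 ≤ i → i ≤ j → j ≤ n → x i ≤ x j)
    (huniq : ∀ i j, 1 ≤ i → i < j → j ≤ n →
      (0 < x i + x j ↔ (i = n - 1 ∧ j = n))) :
    0 < x n ∧ (∀ i, 1 ≤ i → i ≤ n - 2 → x i + x n ≤ 0) ∧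
    ((∃ s, 1 ≤ s ∧ s ≤ n - 2 ∧
        ((Finset.Icc 1 n ×ˢ Finset.Icc 1 n).filter
            (fun p => p.1 < p.2 ∧ x p.1 + x p.2 < 0)).card
          = (s - 1) + (n-1)*(n-2)/2) ∨
     (∃ s, 1 ≤ s ∧ s ≤ n - 2 ∧
        ((Finset.Icc 1 n ×ˢ Finset.Icc 1 n).filter
            (fun p => p.1 < p.2 ∧ x p.1 + x p.2 < 0)).card
          = 2*(s - 1) + (n-2)*(n-3)/2) ∨
     ((Finset.Icc 1 n ×ˢ Finset.Icc 1 n).filter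
         (fun p => p.1 < p.2 ∧ x p.1 + x p.2 < 0)).card = (n-2)*(n+1)/2) := by
  obtain ⟨k, rfl⟩ : ∃ k, n = k + 2 := ⟨n - 2, by omega⟩
  simp only [show k + 2 - 1 = k + 1 by omega, show k + 2 - 3 = k - 1 by omega,
    Nat.add_sub_cancel, add_assoc, Nat.reduceAdd] at huniq ⊢
  have htop : 0 < x (k + 1) + x (k + 2) :=
    (huniq (k + 1) (k + 2) (by omega) (by omega) le_rfl).2 ⟨rfl, rfl⟩
  have hrest : ∀ i j, 1 ≤ i → i ≤ k → i < j → j ≤ k + 2 → x i + x j ≤ 0 :=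
    fun i j hi hik hij hj => not_lt.1 fun h => by
      have := (huniq i j hi hij hj).1 h
      omega
  refine ⟨by linarith [hmono (k + 1) (k + 2) (by omega) (by omega) le_rfl],
    fun i hi hik => hrest i (k + 2) hi hik (by omega) le_rfl, ?_⟩
  rw [card_filter_pairs_add_neg_eq hmono htop hrest]
  have hcard_le (j : ℕ) : #{i ∈ Icc 1 k | x i + x j = 0} ≤ k :=
    (card_filter_le _ _).trans (by rw [Nat.card_Icc, Nat.add_sub_cancel])
  refine choose_two_add_sub_add_sub_mem (hcard_le _) (hcard_le _) ?_
  rcases (hmono (k + 1) (k + 2) (by omega) (by omega) le_rfl).eq_or_lt with heq | hlt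
  · left
    rw [heq]
  · right
    simpa only [Nat.card_Icc, Nat.add_sub_cancel] using
      card_filter_add_card_filter_le (s := Icc 1 k) fun i _ h₁ h₂ => by linarith
end
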